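/- arXiv:2405.01530 — 7 statements merged into one kernel-verified Lean document; each statement's English description precedes it below -/
import Mathlib

section
/- Let f : ℝ_{>0} → ℝ_{>0} be positive and locally integrable, and suppose ∫_1^x f(t)/t dt ≍ f(x) (i.e., there are constants 0 < A ≤ B with A f(x) ≤ ∫_1^x f(t)/t dt ≤ B f(x) for all large x). Then for every λ > 0 there are constants 0 < a_λ ≤ b_λ with a_λ f(x) ≤ f(λx) ≤ b_λ f(x) for all large x. -/
/-!
Put `F x = ∫₁ˣ f(t)/t dt`. Since `f ≥ 0`, `F` is nondecreasing, and `f ≤ F / A` gives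
`F(μx) - F(x) = ∫ₓ^{μx} f(t)/t dt ≤ F(μx) log μ / A`; for `μ = exp (A/2)` this is the doubling
bound `F(μx) ≤ 2 F(x)`, so `F(λx) ≤ 2ⁿ F(x)` whenever `λ ≤ μⁿ`. As `F ≍ f`, this transfers to
`A/B · f(x) ≤ f(λx) ≤ 2ⁿ B/A · f(x)` for `λ ≥ 1`; the case `λ < 1` follows by substituting `x ↦ λx`.
-/

open MeasureTheory Filter Set

def ScaleComparable (f : ℝ → ℝ) (lam : ℝ) : Prop :=
  ∃ a c : ℝ, 0 < a ∧ a ≤ c ∧ ∀ᶠ x in atTop, a * f x ≤ f (lam * x) ∧ f (lam * x) ≤ c * f x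

theorem ScaleComparable.inv {f : ℝ → ℝ} {lam : ℝ} (hlam : 0 < lam) (h : ScaleComparable f lam) :
    ScaleComparable f lam⁻¹ := by
  obtain ⟨a, c, ha, hac, hev⟩ := h
  have hc : 0 < c := ha.trans_le hac
  refine ⟨c⁻¹, a⁻¹, inv_pos.mpr hc, inv_anti₀ ha hac, ?_⟩
  filter_upwards [(tendsto_id.const_mul_atTop' (inv_pos.mpr hlam)).eventually hev]
    with x ⟨hlow, hupp⟩
  rw [← mul_assoc, mul_inv_cancel₀ hlam.ne', one_mul] at hlow hupp
  constructor
  · rw [inv_mul_le_iff₀ hc]; exact hupp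
  · rw [le_inv_mul_iff₀ ha]; exact hlow

theorem MonotoneOn.exists_le_pow_mul_of_le_mul_comp_mul {g : ℝ → ℝ} {X μ K : ℝ} (hX : 0 ≤ X)
    (hg : MonotoneOn g (Ici X)) (hμ : 1 < μ) (hK : 0 ≤ K)
    (hstep : ∀ x, X ≤ x → g (μ * x) ≤ K * g x) {lam : ℝ} (hlam : 1 ≤ lam) :
    ∃ n : ℕ, ∀ x, X ≤ x → g (lam * x) ≤ K ^ n * g x := by
  have hiter : ∀ n : ℕ, ∀ x, X ≤ x → g (μ ^ n * x) ≤ K ^ n * g x := by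
    intro n
    induction n with
    | zero => simp
    | succ n ih =>
      intro x hx
      have hμnx : X ≤ μ ^ n * x :=
        hx.trans (le_mul_of_one_le_left (hX.trans hx) (one_le_pow₀ hμ.le))
      calc g (μ ^ (n + 1) * x) = g (μ * (μ ^ n * x)) := by ring_nf
        _ ≤ K * g (μ ^ n * x) := hstep _ hμnx
        _ ≤ K * (K ^ n * g x) := mul_le_mul_of_nonneg_left (ih x hx) hK
        _ = K ^ (n + 1) * g x := by ring
  obtain ⟨n, hn⟩ := pow_unbounded_of_one_lt lam hμ
  refine ⟨n, fun x hx => (hg ?_ ?_ ?_).trans (hiter n x hx)⟩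
  · exact hx.trans (le_mul_of_one_le_left (hX.trans hx) hlam)
  · exact hx.trans (le_mul_of_one_le_left (hX.trans hx) (hlam.trans hn.le))
  · exact mul_le_mul_of_nonneg_right hn.le (hX.trans hx)

section IntegralDivSelf

variable {f : ℝ → ℝ}

theorem intervalIntegrable_div_self (hloc : LocallyIntegrableOn f (Ioi 0)) {a b : ℝ}
    (ha : 0 < a) (hb : 0 < b) : IntervalIntegrable (fun t => f t / t) volume a b := by
  have hsub : uIcc a b ⊆ Ioi 0 := fun t ht => lt_of_lt_of_le (lt_min ha hb) ht.1
  simp_rw [div_eq_mul_inv]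
  exact ((hloc.mul_continuousOn (continuousOn_inv₀.mono fun t ht => ne_of_gt ht)
    isOpen_Ioi.isLocallyClosed).integrableOn_compact_subset hsub isCompact_uIcc).intervalIntegrable

theorem monotoneOn_integral_div_self (hnonneg : ∀ x, 0 < x → 0 ≤ f x)
    (hloc : LocallyIntegrableOn f (Ioi 0)) :
    MonotoneOn (fun x => ∫ t in (1:ℝ)..x, f t / t) (Ici 1) := by
  intro x hx y hy hxy
  refine intervalIntegral.integral_mono_interval le_rfl hx hxy ?_
    (intervalIntegrable_div_self hloc one_pos (zero_lt_one.trans_le hy))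
  filter_upwards [ae_restrict_mem measurableSet_Ioc] with t ht
  have ht0 : 0 < t := zero_lt_one.trans ht.1
  exact div_nonneg (hnonneg t ht0) ht0.le

theorem integral_div_self_le_mul_log (hnonneg : ∀ x, 0 < x → 0 ≤ f x)
    (hloc : LocallyIntegrableOn f (Ioi 0)) {A x y : ℝ} (hA : 0 < A) (hx : 1 ≤ x) (hxy : x ≤ y)
    (hf : ∀ t ∈ Icc x y, A * f t ≤ ∫ s in (1:ℝ)..t, f s / s) :
    ∫ t in x..y, f t / t ≤ (∫ t in (1:ℝ)..y, f t / t) / A * Real.log (y / x) := by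
  set F : ℝ → ℝ := fun x => ∫ t in (1:ℝ)..x, f t / t
  have hx0 : 0 < x := zero_lt_one.trans_le hx
  have hy0 : 0 < y := hx0.trans_le hxy
  calc ∫ t in x..y, f t / t ≤ ∫ t in x..y, F y / A * t⁻¹ := by
        refine intervalIntegral.integral_mono_on hxy (intervalIntegrable_div_self hloc hx0 hy0)
          ((intervalIntegral.intervalIntegrable_inv (fun t ht => ?_)
            continuousOn_id).const_mul _) fun t ht => ?_
        · exact ((lt_min hx0 hy0).trans_le ht.1).ne'
        have ht0 : 0 < t := hx0.trans_le ht.1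
        have hFt : F t ≤ F y :=
          monotoneOn_integral_div_self hnonneg hloc (hx.trans ht.1) (hx.trans hxy) ht.2
        rw [div_eq_mul_inv (f t)]
        refine mul_le_mul_of_nonneg_right ?_ (inv_nonneg.mpr ht0.le)
        rw [le_div_iff₀ hA, mul_comm]
        exact (hf t ht).trans hFt
    _ = F y / A * Real.log (y / x) := by
        rw [intervalIntegral.integral_const_mul, integral_inv_of_pos hx0 hy0]

theorem integral_div_self_le_two_mul (hnonneg : ∀ x, 0 < x → 0 ≤ f x)
    (hloc : LocallyIntegrableOn f (Ioi 0)) {A X x : ℝ} (hA : 0 < A) (hX : 1 ≤ X) (hx : X ≤ x)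
    (hf : ∀ t, X ≤ t → A * f t ≤ ∫ s in (1:ℝ)..t, f s / s) :
    ∫ t in (1:ℝ)..Real.exp (A / 2) * x, f t / t ≤ 2 * ∫ t in (1:ℝ)..x, f t / t := by
  set F : ℝ → ℝ := fun x => ∫ t in (1:ℝ)..x, f t / t
  set μ := Real.exp (A / 2)
  have hx1 : 1 ≤ x := hX.trans hx
  have hx0 : 0 < x := zero_lt_one.trans_le hx1
  have hμx : x ≤ μ * x := le_mul_of_one_le_left hx0.le (Real.one_le_exp (by positivity))
  have hsplit : F x + ∫ t in x..μ * x, f t / t = F (μ * x) :=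
    intervalIntegral.integral_add_adjacent_intervals
      (intervalIntegrable_div_self hloc one_pos hx0)
      (intervalIntegrable_div_self hloc hx0 (hx0.trans_le hμx))
  have hincr : ∫ t in x..μ * x, f t / t ≤ F (μ * x) / 2 :=
    calc ∫ t in x..μ * x, f t / t ≤ F (μ * x) / A * Real.log (μ * x / x) :=
          integral_div_self_le_mul_log hnonneg hloc hA hx1 hμx fun t ht => hf t (hx.trans ht.1)
      _ = F (μ * x) / 2 := by
          rw [mul_div_cancel_right₀ μ hx0.ne', Real.log_exp]
          field_simp
  change F (μ * x) ≤ 2 * F x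
  linarith

theorem scaleComparable_of_integral_div_self_asymp (hpos : ∀ x, 0 < x → 0 < f x)
    (hloc : LocallyIntegrableOn f (Ioi 0)) {A B : ℝ} (hA : 0 < A) (hAB : A ≤ B)
    (hasymp : ∀ᶠ x in atTop, A * f x ≤ (∫ t in (1:ℝ)..x, f t / t) ∧
      (∫ t in (1:ℝ)..x, f t / t) ≤ B * f x) {lam : ℝ} (hlam : 1 ≤ lam) :
    ScaleComparable f lam := by
  set F : ℝ → ℝ := fun x => ∫ t in (1:ℝ)..x, f t / t
  have hnonneg : ∀ x, 0 < x → 0 ≤ f x := fun x hx => (hpos x hx).le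
  have hB : 0 < B := hA.trans_le hAB
  obtain ⟨X₀, hX₀⟩ := eventually_atTop.mp hasymp
  set X := max X₀ 1
  have hX : ∀ x, X ≤ x → A * f x ≤ F x ∧ F x ≤ B * f x :=
    fun x hx => hX₀ x ((le_max_left _ _).trans hx)
  have hX1 : 1 ≤ X := le_max_right _ _
  have hFmono : MonotoneOn F (Ici X) :=
    (monotoneOn_integral_div_self hnonneg hloc).mono (Ici_subset_Ici.mpr hX1)
  obtain ⟨n, hn⟩ := hFmono.exists_le_pow_mul_of_le_mul_comp_mul (zero_le_one.trans hX1)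
    (Real.one_lt_exp_iff.mpr (half_pos hA)) zero_le_two
    (fun x hx => integral_div_self_le_two_mul hnonneg hloc hA hX1 hx fun t ht => (hX t ht).1) hlam
  have hpow : (1:ℝ) ≤ 2 ^ n := one_le_pow₀ one_le_two
  refine ⟨A / B, 2 ^ n * B / A, by positivity, ?_, ?_⟩
  · calc A / B ≤ 1 := (div_le_one hB).mpr hAB
      _ ≤ 2 ^ n * B / A := by rw [le_div_iff₀ hA]; nlinarith
  filter_upwards [eventually_ge_atTop X] with x hx
  have hx0 : 0 < x := zero_lt_one.trans_le (hX1.trans hx)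
  have hlamx : X ≤ lam * x := hx.trans (le_mul_of_one_le_left hx0.le hlam)
  obtain ⟨hfx_low, hfx_upp⟩ := hX x hx
  obtain ⟨hflx_low, hflx_upp⟩ := hX (lam * x) hlamx
  have hFx_le : F x ≤ F (lam * x) := hFmono hx hlamx (le_mul_of_one_le_left hx0.le hlam)
  have hFlx_le : F (lam * x) ≤ 2 ^ n * F x := hn x hx
  constructor
  · rw [div_mul_eq_mul_div, div_le_iff₀ hB]
    nlinarith
  · rw [div_mul_eq_mul_div, le_div_iff₀ hA]
    nlinarith

end IntegralDivSelf

theorem stmt_2 (f : ℝ → ℝ) (hpos : ∀ x : ℝ, 0 < x → 0 < f x)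
    (hloc : LocallyIntegrableOn f (Set.Ioi (0:ℝ)))
    (A B : ℝ) (hA : 0 < A) (hAB : A ≤ B)
    (hasymp : ∀ᶠ x in atTop, A * f x ≤ (∫ t in (1:ℝ)..x, f t / t) ∧
      (∫ t in (1:ℝ)..x, f t / t) ≤ B * f x) :
    ∀ lam : ℝ, 0 < lam → ∃ a c : ℝ, 0 < a ∧ a ≤ c ∧
      ∀ᶠ x in atTop, a * f x ≤ f (lam * x) ∧ f (lam * x) ≤ c * f x := by
  intro lam hlam
  rcases le_or_gt 1 lam with hlam1 | hlam1
  · exact scaleComparable_of_integral_div_self_asymp hpos hloc hA hAB hasymp hlam1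
  · have hinv := scaleComparable_of_integral_div_self_asymp hpos hloc hA hAB hasymp
      (one_le_inv₀ hlam |>.mpr hlam1.le)
    rw [← inv_inv lam]
    exact hinv.inv (inv_pos.mpr hlam)
end

section
/- Let f : ℝ_{>0} → ℝ_{>0} be positive and locally integrable with ∫_1^x f(t)/t dt ≍ f(x). Then there exist ϑ > 0, M > 0, and x_0 such that for all y > x ≥ x_0 one has f(x)/x^ϑ ≤ M · f(y)/y^ϑ. -/
/-!
Put `F x = ∫ t in 1..x, f t / t`, increasing since `f > 0`. For `t ≥ x` the bound `F ≤ B f` gives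
`f t ≥ F t / B ≥ F x / B`, so `F (x e^B) ≥ F x + (F x / B) · B = 2 F x`.
A monotone function that doubles along every multiplicative step `e^B` grows at least like
`x ^ ϑ` with `ϑ = log 2 / B`, up to a factor `2`; together with `A f ≤ F ≤ B f` this gives the
claim with `M = 2B / A`.
-/

open MeasureTheory Filter Real Set

namespace MeasureTheory.LocallyIntegrableOn

variable {f : ℝ → ℝ}

theorem intervalIntegrable_div (hf : LocallyIntegrableOn f (Ioi 0)) {a b : ℝ} (ha : 0 < a)
    (hb : 0 < b) :
    IntervalIntegrable (fun t => f t / t) volume a b := by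
  have hsub : uIcc a b ⊆ Ioi 0 := fun t ht => lt_of_lt_of_le (lt_min ha hb) ht.1
  have hinv : ContinuousOn (fun t : ℝ => t⁻¹) (uIcc a b) :=
    continuousOn_inv₀.mono fun t ht => (hsub ht).ne'
  exact ((hf.integrableOn_compact_subset hsub isCompact_uIcc).mul_continuousOn hinv
    isCompact_uIcc).intervalIntegrable

theorem mul_log_div_le_integral_div (hf : LocallyIntegrableOn f (Ioi 0)) {c x y : ℝ} (hx : 0 < x)
    (hxy : x ≤ y) (hc : ∀ t ∈ Icc x y, c ≤ f t) :
    c * log (y / x) ≤ ∫ t in x..y, f t / t := by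
  have hy : 0 < y := hx.trans_le hxy
  have hpos : ∀ t ∈ Icc x y, 0 < t := fun t ht => hx.trans_le ht.1
  calc c * log (y / x) = ∫ t in x..y, c / t := by
        simp only [div_eq_mul_inv c, intervalIntegral.integral_const_mul,
          integral_inv_of_pos hx hy]
    _ ≤ ∫ t in x..y, f t / t :=
        intervalIntegral.integral_mono_on hxy
          ((locallyIntegrableOn_const c).intervalIntegrable_div hx hy)
          (hf.intervalIntegrable_div hx hy)
          fun t ht => div_le_div_of_nonneg_right (hc t ht) (hpos t ht).le

theorem monotoneOn_integral_div (hf : LocallyIntegrableOn f (Ioi 0))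
    (hf₀ : ∀ t, 0 < t → 0 ≤ f t) {a : ℝ} (ha : 0 < a) :
    MonotoneOn (fun x => ∫ t in a..x, f t / t) (Ici a) := by
  intro x hx y hy hxy
  have hx₀ : 0 < x := ha.trans_le hx
  dsimp only
  rw [← intervalIntegral.integral_add_adjacent_intervals (hf.intervalIntegrable_div ha hx₀)
    (hf.intervalIntegrable_div hx₀ (hx₀.trans_le hxy)), le_add_iff_nonneg_right]
  exact intervalIntegral.integral_nonneg hxy fun t ht =>
    div_nonneg (hf₀ t (hx₀.trans_le ht.1)) (hx₀.trans_le ht.1).le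

theorem two_mul_integral_div_le_integral_mul_exp
    (hf : LocallyIntegrableOn f (Ioi 0)) {a B x₀ x : ℝ} (ha : 0 < a) (hax₀ : a ≤ x₀) (hB : 0 < B)
    (hmono : MonotoneOn (fun x => ∫ t in a..x, f t / t) (Ici x₀))
    (hupper : ∀ t, x₀ ≤ t → (∫ s in a..t, f s / s) ≤ B * f t) (hx : x₀ ≤ x) :
    2 * (∫ t in a..x, f t / t) ≤ ∫ t in a..x * exp B, f t / t := by
  have hx₀ : 0 < x := ha.trans_le (hax₀.trans hx)
  have hxy : x ≤ x * exp B := le_mul_of_one_le_right hx₀.le (one_le_exp hB.le)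
  have hlower : ∀ t ∈ Icc x (x * exp B), (∫ s in a..x, f s / s) / B ≤ f t :=
    fun t ht => (div_le_iff₀' hB).2 <|
      (hmono hx (hx.trans ht.1) ht.1).trans (hupper t (hx.trans ht.1))
  have hincrement := hf.mul_log_div_le_integral_div hx₀ hxy hlower
  rw [mul_div_cancel_left₀ _ hx₀.ne', log_exp, div_mul_cancel₀ _ hB.ne'] at hincrement
  rw [← intervalIntegral.integral_add_adjacent_intervals (hf.intervalIntegrable_div ha hx₀)
    (hf.intervalIntegrable_div hx₀ (hx₀.trans_le hxy))]
  linarith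

end MeasureTheory.LocallyIntegrableOn

theorem two_pow_mul_le_of_doubling {G : ℝ → ℝ} {x₀ L x : ℝ} (hL : 0 ≤ L)
    (hdouble : ∀ x, x₀ ≤ x → 2 * G x ≤ G (x * exp L)) (hx : x₀ ≤ x) (hx0 : 0 ≤ x) (n : ℕ) :
    2 ^ n * G x ≤ G (x * exp (n * L)) := by
  induction n with
  | zero => simp
  | succ n ih =>
    have hn : x₀ ≤ x * exp (n * L) :=
      hx.trans (le_mul_of_one_le_right hx0 (one_le_exp (by positivity)))
    calc 2 ^ (n + 1) * G x = 2 * (2 ^ n * G x) := by ring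
      _ ≤ 2 * G (x * exp (n * L)) := by gcongr
      _ ≤ G (x * exp (n * L) * exp L) := hdouble _ hn
      _ = G (x * exp ((n + 1 : ℕ) * L)) := by
        rw [mul_assoc, ← exp_add, Nat.cast_succ, add_one_mul]

theorem MonotoneOn.div_rpow_le_of_doubling {G : ℝ → ℝ} {x₀ L x y : ℝ} (hx₀ : 0 < x₀)
    (hL : 0 < L) (hmono : MonotoneOn G (Ici x₀))
    (hdouble : ∀ x, x₀ ≤ x → 2 * G x ≤ G (x * exp L)) (hx : x₀ ≤ x) (hxy : x ≤ y)
    (hGx : 0 ≤ G x) :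
    G x / x ^ (log 2 / L) ≤ 2 * (G y / y ^ (log 2 / L)) := by
  have hx0 : 0 < x := hx₀.trans_le hx
  have hy0 : 0 < y := hx0.trans_le hxy
  set r := log (y / x) / L with hr
  have hr0 : 0 ≤ r := div_nonneg (log_nonneg ((one_le_div hx0).2 hxy)) hL.le
  set n := ⌊r⌋₊
  have hn : x * exp (n * L) ≤ y := by
    rw [← le_div_iff₀' hx0, ← le_log_iff_exp_le (div_pos hy0 hx0), ← le_div_iff₀ hL]
    exact Nat.floor_le hr0
  have hratio : (y / x) ^ (log 2 / L) ≤ 2 ^ (n + 1) := by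
    calc (y / x) ^ (log 2 / L) = (2 : ℝ) ^ r := by
          rw [rpow_def_of_pos (div_pos hy0 hx0), rpow_def_of_pos two_pos, hr]
          congr 1
          ring
      _ ≤ (2 : ℝ) ^ ((n + 1 : ℕ) : ℝ) := by
          gcongr
          · norm_num
          · push_cast; exact (Nat.lt_floor_add_one r).le
      _ = 2 ^ (n + 1) := rpow_natCast 2 (n + 1)
  have hGn : G (x * exp (n * L)) ≤ G y :=
    hmono (hx.trans (le_mul_of_one_le_right hx0.le (one_le_exp (by positivity))))
      (hx.trans hxy) hn
  have hgrowth : G x * (y / x) ^ (log 2 / L) ≤ 2 * G y :=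
    calc G x * (y / x) ^ (log 2 / L) ≤ G x * 2 ^ (n + 1) := by gcongr
      _ = 2 * (2 ^ n * G x) := by ring
      _ ≤ 2 * G y := by
          gcongr
          exact (two_pow_mul_le_of_doubling hL.le hdouble hx hx0.le n).trans hGn
  rw [div_rpow hy0.le hx0.le] at hgrowth
  calc G x / x ^ (log 2 / L)
        = G x * (y ^ (log 2 / L) / x ^ (log 2 / L)) / y ^ (log 2 / L) := by field_simp
    _ ≤ 2 * G y / y ^ (log 2 / L) := by gcongr
    _ = 2 * (G y / y ^ (log 2 / L)) := mul_div_assoc _ _ _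

theorem stmt_3 (f : ℝ → ℝ) (hpos : ∀ x : ℝ, 0 < x → 0 < f x)
    (hloc : LocallyIntegrableOn f (Set.Ioi (0:ℝ)))
    (A B : ℝ) (hA : 0 < A) (hAB : A ≤ B)
    (hasymp : ∀ᶠ x in atTop, A * f x ≤ (∫ t in (1:ℝ)..x, f t / t) ∧
      (∫ t in (1:ℝ)..x, f t / t) ≤ B * f x) :
    ∃ ϑ : ℝ, 0 < ϑ ∧ ∃ M : ℝ, 0 < M ∧ ∃ x₀ : ℝ,
      ∀ x y : ℝ, x₀ ≤ x → x < y → f x / x ^ ϑ ≤ M * (f y / y ^ ϑ) := by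
  obtain ⟨N, hN⟩ := eventually_atTop.1 hasymp
  have hB : 0 < B := hA.trans_le hAB
  set x₀ := max N 1
  have hNx₀ : N ≤ x₀ := le_max_left N 1
  have h1x₀ : 1 ≤ x₀ := le_max_right N 1
  set F : ℝ → ℝ := fun x => ∫ t in (1:ℝ)..x, f t / t
  have hmono : MonotoneOn F (Ici x₀) :=
    (hloc.monotoneOn_integral_div (fun t ht => (hpos t ht).le) one_pos).mono
      (Ici_subset_Ici.2 h1x₀)
  have hdouble : ∀ x, x₀ ≤ x → 2 * F x ≤ F (x * exp B) := fun x hx =>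
    hloc.two_mul_integral_div_le_integral_mul_exp one_pos h1x₀ hB hmono
      (fun t ht => (hN t (hNx₀.trans ht)).2) hx
  refine ⟨log 2 / B, div_pos (log_pos one_lt_two) hB, 2 * B / A, by positivity, x₀,
    fun x y hx hxy => ?_⟩
  have hx0 : 0 < x := one_pos.trans_le (h1x₀.trans hx)
  have hfx : A * f x ≤ F x := (hN x (hNx₀.trans hx)).1
  have hfy : F y ≤ B * f y := (hN y (hNx₀.trans (hx.trans hxy.le))).2
  have hgrowth := hmono.div_rpow_le_of_doubling (one_pos.trans_le h1x₀) hB hdouble hx hxy.le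
     ((mul_nonneg hA.le (hpos x hx0).le).trans hfx)
  calc f x / x ^ (log 2 / B) ≤ F x / x ^ (log 2 / B) / A := by
        rw [div_right_comm]
        gcongr
        exact (le_div_iff₀' hA).2 hfx
    _ ≤ 2 * (F y / y ^ (log 2 / B)) / A := by gcongr
    _ ≤ 2 * (B * f y / y ^ (log 2 / B)) / A := by
        gcongr
        exact (rpow_pos_of_pos (hx0.trans hxy) _).le
    _ = 2 * B / A * (f y / y ^ (log 2 / B)) := by ring
end

section
/- Let f : ℝ_{>0} → ℝ_{>0} be positive and locally integrable. Suppose (i) for every λ > 0, f(λx) ≍_λ f(x), and (ii) there exist ϑ > 0, M > 0, x_0 such that f(x)/x^ϑ ≤ M f(y)/y^ϑ whenever y > x ≥ x_0. Then ∫_1^x f(t)/t dt ≍ f(x). -/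
/-!
Since `f t / t ^ ϑ` is almost increasing, `f t / t ≤ M (f x / x ^ ϑ) t ^ (ϑ - 1)` on `[x₁, x]`, and
integrating gives `∫_{x₁}^x f t / t ≤ (M / ϑ) f x`; the same monotonicity makes `f x ≳ x ^ ϑ` tend
to infinity, so it eventually dominates the fixed piece `∫_1^{x₁}`. Conversely `f t ≥ f (x / 2) / M`
on `[x / 2, x]`, so `∫_{x/2}^x f t / t ≥ f (x / 2) / (2 M) ≥ a f x / (2 M)` by (i) with `λ = 1 / 2`.
-/

open MeasureTheory Filter Set

lemma MeasureTheory.LocallyIntegrableOn.intervalIntegrable_div_self {f : ℝ → ℝ}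
    (hf : LocallyIntegrableOn f (Ioi 0)) {u v : ℝ} (hu : 0 < u) (hv : 0 < v) :
    IntervalIntegrable (fun t => f t / t) volume u v := by
  have hloc : LocallyIntegrableOn (fun t => f t * t⁻¹) (Ioi 0) :=
    hf.mul_continuousOn (continuousOn_inv₀.mono fun _ ht => ne_of_gt ht)
      isOpen_Ioi.isLocallyClosed
  have hsub : uIcc u v ⊆ Ioi 0 := fun t ht => lt_of_lt_of_le (lt_min hu hv) ht.1
  simpa only [div_eq_mul_inv] using
    (hloc.integrableOn_compact_subset hsub isCompact_uIcc).intervalIntegrable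

def AlmostMonotoneFrom (g : ℝ → ℝ) (M x₀ : ℝ) : Prop :=
  ∀ x y, x₀ ≤ x → x < y → g x ≤ M * g y

namespace AlmostMonotoneFrom

variable {f : ℝ → ℝ} {ϑ M x₀ : ℝ} (h : AlmostMonotoneFrom (fun x => f x / x ^ ϑ) M x₀)
include h

lemma le_mul (hϑ : 0 ≤ ϑ) (hM : 0 ≤ M) {x y : ℝ} (hx₀ : x₀ ≤ x) (hx : 0 < x) (hxy : x < y)
    (hfy : 0 ≤ f y) : f x ≤ M * f y := by
  have hy : 0 < y := hx.trans hxy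
  calc f x = f x / x ^ ϑ * x ^ ϑ := by field_simp
    _ ≤ M * (f y / y ^ ϑ) * x ^ ϑ := by gcongr; exact h x y hx₀ hxy
    _ ≤ M * (f y / y ^ ϑ) * y ^ ϑ := by gcongr
    _ = M * f y := by field_simp

lemma tendsto_atTop (hϑ : 0 < ϑ) (hM : 0 < M) {x₁ : ℝ} (hx₁ : x₀ ≤ x₁) (hx₁0 : 0 < x₁)
    (hfx₁ : 0 < f x₁) : Tendsto f atTop atTop := by
  have hpow : Tendsto (fun x : ℝ => f x₁ / (M * x₁ ^ ϑ) * x ^ ϑ) atTop atTop :=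
    (tendsto_rpow_atTop hϑ).const_mul_atTop (by positivity)
  refine tendsto_atTop_mono' atTop ?_ hpow
  filter_upwards [eventually_gt_atTop x₁] with x hx
  have hx0 : 0 < x := hx₁0.trans hx
  calc f x₁ / (M * x₁ ^ ϑ) * x ^ ϑ = f x₁ / x₁ ^ ϑ / M * x ^ ϑ := by ring
    _ ≤ M * (f x / x ^ ϑ) / M * x ^ ϑ := by gcongr; exact h x₁ x hx₁ hx
    _ = f x := by field_simp

lemma mul_le_integral_div_self (hϑ : 0 ≤ ϑ) (hM : 0 ≤ M) {u x : ℝ} (hu₀ : x₀ ≤ u) (hu : 0 < u)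
    (hux : u ≤ x) (hf : ∀ t ∈ Ioc u x, 0 ≤ f t)
    (hint : IntervalIntegrable (fun t => f t / t) volume u x) :
    (x - u) * (f u / x) ≤ M * ∫ t in u..x, f t / t := by
  rw [← intervalIntegral.integral_const_mul, ← smul_eq_mul,
    ← intervalIntegral.integral_const]
  refine intervalIntegral.integral_mono_on_of_le_Ioo hux intervalIntegrable_const
    (hint.const_mul M) fun t ht => ?_
  have ht0 : 0 < t := hu.trans ht.1
  have hft : 0 ≤ f t := hf t (Ioo_subset_Ioc_self ht)
  calc f u / x ≤ M * f t / x :=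
        div_le_div_of_nonneg_right (h.le_mul hϑ hM hu₀ hu ht.1 hft) (ht0.trans ht.2).le
    _ ≤ M * f t / t := div_le_div_of_nonneg_left (by positivity) ht0 ht.2.le
    _ = M * (f t / t) := mul_div_assoc _ _ _

lemma integral_div_self_le (hϑ : 0 < ϑ) (hM : 0 ≤ M) {u x : ℝ} (hu₀ : x₀ ≤ u) (hu : 0 < u)
    (hux : u ≤ x) (hfx : 0 ≤ f x)
    (hint : IntervalIntegrable (fun t => f t / t) volume u x) :
    ∫ t in u..x, f t / t ≤ M / ϑ * f x := by
  have hx : 0 < x := hu.trans_le hux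
  have hzero : (0 : ℝ) ∉ uIcc u x := by
    rw [uIcc_of_le hux]; exact fun h0 => absurd h0.1 (not_le.mpr hu)
  have hbound : ∫ t in u..x, f t / t ≤ ∫ t in u..x, M * (f x / x ^ ϑ) * t ^ (ϑ - 1) := by
    refine intervalIntegral.integral_mono_on_of_le_Ioo hux hint
      ((intervalIntegral.intervalIntegrable_rpow (Or.inr hzero)).const_mul _) fun t ht => ?_
    have ht0 : 0 < t := hu.trans ht.1
    calc f t / t = f t / t ^ ϑ * t ^ (ϑ - 1) := by
          rw [Real.rpow_sub ht0, Real.rpow_one]; field_simp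
      _ ≤ M * (f x / x ^ ϑ) * t ^ (ϑ - 1) := by
          gcongr; exact h t x (hu₀.trans ht.1.le) ht.2
  calc ∫ t in u..x, f t / t ≤ ∫ t in u..x, M * (f x / x ^ ϑ) * t ^ (ϑ - 1) := hbound
    _ = M * (f x / x ^ ϑ) * ((x ^ ϑ - u ^ ϑ) / ϑ) := by
        rw [intervalIntegral.integral_const_mul, integral_rpow (Or.inr ⟨by linarith, hzero⟩),
          sub_add_cancel]
    _ ≤ M * (f x / x ^ ϑ) * (x ^ ϑ / ϑ) := by
        gcongr; linarith [Real.rpow_nonneg hu.le ϑ]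
    _ = M / ϑ * f x := by field_simp

end AlmostMonotoneFrom

theorem stmt_4 (f : ℝ → ℝ) (hpos : ∀ x : ℝ, 0 < x → 0 < f x)
    (hloc : LocallyIntegrableOn f (Set.Ioi (0:ℝ)))
    (h1 : ∀ lam : ℝ, 0 < lam → ∃ a c : ℝ, 0 < a ∧ a ≤ c ∧
      ∀ᶠ x in atTop, a * f x ≤ f (lam * x) ∧ f (lam * x) ≤ c * f x)
    (h2 : ∃ ϑ : ℝ, 0 < ϑ ∧ ∃ M : ℝ, 0 < M ∧ ∃ x₀ : ℝ,
      ∀ x y : ℝ, x₀ ≤ x → x < y → f x / x ^ ϑ ≤ M * (f y / y ^ ϑ)) :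
    ∃ A B : ℝ, 0 < A ∧ A ≤ B ∧
      ∀ᶠ x in atTop, A * f x ≤ (∫ t in (1:ℝ)..x, f t / t) ∧
        (∫ t in (1:ℝ)..x, f t / t) ≤ B * f x := by
  obtain ⟨ϑ, hϑ, M, hM, x₀, hmon : AlmostMonotoneFrom (fun x => f x / x ^ ϑ) M x₀⟩ := h2
  obtain ⟨a, _, ha, _, hhalf⟩ := h1 (1 / 2) one_half_pos
  obtain ⟨x₁, hx₀x₁, hx₁⟩ : ∃ x₁, x₀ ≤ x₁ ∧ 1 ≤ x₁ := ⟨max x₀ 1, le_max_left _ _, le_max_right _ _⟩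
  have hint (u v : ℝ) (hu : 0 < u) (hv : 0 < v) := hloc.intervalIntegrable_div_self hu hv
  have hgrowth : Tendsto f atTop atTop :=
    hmon.tendsto_atTop hϑ hM hx₀x₁ (by positivity) (hpos x₁ (by positivity))
  refine ⟨a / (2 * M), a / (2 * M) + (1 + M / ϑ), by positivity,
    by linarith [show 0 < M / ϑ by positivity], ?_⟩
  filter_upwards [eventually_ge_atTop (2 * x₁), hhalf,
    hgrowth.eventually_ge_atTop (∫ t in (1:ℝ)..x₁, f t / t)] with x hx hfx_half hfx_large
  have hx0 : 0 < x := by linarith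
  have hfx : 0 < f x := hpos x hx0
  replace hfx_half : a * f x ≤ f (x / 2) := by
    simpa only [one_div_mul_eq_div] using hfx_half.1
  constructor
  · have hhead : 0 ≤ ∫ t in (1:ℝ)..x / 2, f t / t :=
      intervalIntegral.integral_nonneg (by linarith) fun t ht =>
        (div_pos (hpos t (by linarith [ht.1])) (by linarith [ht.1])).le
    have htail : f (x / 2) / 2 ≤ M * ∫ t in x / 2..x, f t / t := by
      convert hmon.mul_le_integral_div_self hϑ.le hM.le (u := x / 2) (x := x) (by linarith)
        (by linarith) (by linarith) (fun t ht => (hpos t (by linarith [ht.1])).le)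
        (hint (x / 2) x (by linarith) hx0) using 1
      field_simp; ring
    rw [← intervalIntegral.integral_add_adjacent_intervals (hint 1 (x / 2) one_pos (by linarith))
      (hint (x / 2) x (by linarith) hx0), div_mul_eq_mul_div, div_le_iff₀ (by positivity)]
    nlinarith
  · have htail := hmon.integral_div_self_le hϑ hM.le (u := x₁) (x := x) hx₀x₁ (by positivity)
      (by linarith) hfx.le (hint x₁ x (by positivity) hx0)
    rw [← intervalIntegral.integral_add_adjacent_intervals (hint 1 x₁ one_pos (by positivity))
      (hint x₁ x (by positivity) hx0)]
    nlinarith [show 0 < a / (2 * M) * f x by positivity]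
end

section
/- Let L ≥ 1 and 0 ≤ r < L be integers, and let α ≥ β > 0 be reals with β ≤ 1. Then S(n) := Σ_{1 ≤ m ≤ n-1, m ≡ r (mod L)} m^{α-1} (n-m)^{β-1} = (Γ(α)Γ(β)/Γ(α+β)) · n^{α+β-1}/L + O_{α,β,L}(n^{α-1}) as n → ∞. -/
/-!
The integral `∫₀ⁿ t ^ (α - 1) * (n - t) ^ (β - 1)` is the rescaled Beta integral
`Γ(α) Γ(β) / Γ(α + β) * n ^ (α + β - 1)`, and `L` times the sum is a Riemann sum for it on the grid
`m₀, m₀ + L, …` of step `L`, where `m₀ ∈ [1, L]` is the least positive integer `≡ r`. The integrand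
is a product `u * v` of monotone factors (`v = (n - t) ^ (β - 1)` is increasing as `β ≤ 1`), so the
error on a cell is at most `L * (sup |u| * Δv + sup |v| * Δu)`, and the increments telescope.
Splitting the grid at `n / 2`: on the left `v ≤ (n / 4) ^ (β - 1)` and `u ≤ max 1 (n ^ (α - 1))`,
whose product is `O(n ^ (α - 1))` because `β ≤ α`; on the right `u = O(n ^ (α - 1))` and `v ≤ 1`,
since the grid stays at distance `≥ 1` from `n`. The two end pieces of the integral have length
at most `L`, and integrating their singular factor exactly shows they are `O(n ^ (α - 1))` too.
-/

open MeasureTheory Set Finset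

lemma abs_sub_le_abs_sub_of_monotoneOn_or_antitoneOn {g : ℝ → ℝ} {x y t : ℝ}
    (hg : MonotoneOn g (Icc x y) ∨ AntitoneOn g (Icc x y)) (ht : t ∈ Icc x y) :
    |g t - g x| ≤ |g y - g x| := by
  have hx : x ∈ Icc x y := ⟨le_rfl, ht.1.trans ht.2⟩
  have hy : y ∈ Icc x y := ⟨ht.1.trans ht.2, le_rfl⟩
  rcases hg with hg | hg
  · have h₁ := hg hx ht ht.1
    have h₂ := hg ht hy ht.2
    exact abs_le_abs (by linarith) (by linarith)
  · have h₁ := hg hx ht ht.1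
    have h₂ := hg ht hy ht.2
    exact abs_le_abs_of_nonpos (by linarith) (by linarith)

lemma abs_sub_add_abs_sub_eq_of_monotoneOn_or_antitoneOn {g : ℝ → ℝ} {x y z : ℝ}
    (hg : MonotoneOn g (Icc x z) ∨ AntitoneOn g (Icc x z)) (hxy : x ≤ y) (hyz : y ≤ z) :
    |g y - g x| + |g z - g y| = |g z - g x| := by
  have hx : x ∈ Icc x z := ⟨le_rfl, hxy.trans hyz⟩
  have hy : y ∈ Icc x z := ⟨hxy, hyz⟩
  have hz : z ∈ Icc x z := ⟨hxy.trans hyz, le_rfl⟩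
  rcases hg with hg | hg
  · have h₁ := hg hx hy hxy
    have h₂ := hg hy hz hyz
    rw [abs_of_nonneg (sub_nonneg.2 h₁), abs_of_nonneg (sub_nonneg.2 h₂),
      abs_of_nonneg (by linarith)]
    ring
  · have h₁ := hg hx hy hxy
    have h₂ := hg hy hz hyz
    rw [abs_of_nonpos (sub_nonpos.2 h₁), abs_of_nonpos (sub_nonpos.2 h₂),
      abs_of_nonpos (by linarith)]
    ring

lemma abs_mul_sub_mul_le {u v : ℝ → ℝ} {x y t Bu Bv : ℝ}
    (hu : MonotoneOn u (Icc x y) ∨ AntitoneOn u (Icc x y))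
    (hv : MonotoneOn v (Icc x y) ∨ AntitoneOn v (Icc x y))
    (hBu : ∀ s ∈ Icc x y, |u s| ≤ Bu) (hBv : ∀ s ∈ Icc x y, |v s| ≤ Bv) (ht : t ∈ Icc x y) :
    |u x * v x - u t * v t| ≤ Bu * |v y - v x| + Bv * |u y - u x| := by
  have hx : x ∈ Icc x y := ⟨le_rfl, ht.1.trans ht.2⟩
  calc |u x * v x - u t * v t| = |u t * (v t - v x) + v x * (u t - u x)| := by
        rw [← abs_neg]; ring_nf
    _ ≤ |u t| * |v t - v x| + |v x| * |u t - u x| := by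
        rw [← abs_mul, ← abs_mul]; exact abs_add_le _ _
    _ ≤ Bu * |v y - v x| + Bv * |u y - u x| := add_le_add
        (mul_le_mul (hBu t ht) (abs_sub_le_abs_sub_of_monotoneOn_or_antitoneOn hv ht)
          (abs_nonneg _) ((abs_nonneg _).trans (hBu t ht)))
        (mul_le_mul (hBv x hx) (abs_sub_le_abs_sub_of_monotoneOn_or_antitoneOn hu ht)
          (abs_nonneg _) ((abs_nonneg _).trans (hBv x hx)))

lemma abs_mul_sub_intervalIntegral_le {f : ℝ → ℝ} {x y δ : ℝ} (hxy : x ≤ y)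
    (hf : IntervalIntegrable f volume x y) (hδ : ∀ t ∈ Icc x y, |f x - f t| ≤ δ) :
    |(y - x) * f x - ∫ t in x..y, f t| ≤ (y - x) * δ := by
  have hsplit : (y - x) * f x - ∫ t in x..y, f t = ∫ t in x..y, (f x - f t) := by
    rw [intervalIntegral.integral_sub intervalIntegrable_const hf, intervalIntegral.integral_const,
      smul_eq_mul]
  have hbound := intervalIntegral.norm_integral_le_of_norm_le_const (a := x) (b := y)
    (f := fun t => f x - f t) (C := δ) fun t ht => by
      rw [uIoc_of_le hxy] at ht
      exact hδ t (Ioc_subset_Icc_self ht)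
  rwa [hsplit, ← Real.norm_eq_abs, mul_comm, ← abs_of_nonneg (sub_nonneg.2 hxy)]

theorem abs_riemannSum_mul_sub_integral_le {u v : ℝ → ℝ} {a h Bu Bv : ℝ} (hh : 0 ≤ h) (q : ℕ)
    (hu : MonotoneOn u (Icc a (a + q * h)) ∨ AntitoneOn u (Icc a (a + q * h)))
    (hv : MonotoneOn v (Icc a (a + q * h)) ∨ AntitoneOn v (Icc a (a + q * h)))
    (huv : IntervalIntegrable (fun t => u t * v t) volume a (a + q * h))
    (hBu : ∀ t ∈ Icc a (a + q * h), |u t| ≤ Bu) (hBv : ∀ t ∈ Icc a (a + q * h), |v t| ≤ Bv) :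
    |h * ∑ k ∈ range q, u (a + k * h) * v (a + k * h) - ∫ t in a..(a + q * h), u t * v t| ≤
      h * (Bu * |v (a + q * h) - v a| + Bv * |u (a + q * h) - u a|) := by
  induction q with
  | zero => simp
  | succ q ih =>
    set x := a + q * h
    set y := a + (q + 1 : ℕ) * h
    have hxy : x ≤ y := by simp only [x, y]; push_cast; linarith
    have hax : a ≤ x := le_add_of_nonneg_right (mul_nonneg q.cast_nonneg hh)
    have hleft : Icc a x ⊆ Icc a y := Icc_subset_Icc_right hxy
    have hright : Icc x y ⊆ Icc a y := Icc_subset_Icc_left hax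
    have hcell := abs_mul_sub_intervalIntegral_le hxy (huv.mono_set (by
        rw [uIcc_of_le hxy, uIcc_of_le (hax.trans hxy)]; exact hright))
      fun t ht => abs_mul_sub_mul_le (hu.imp (·.mono hright) (·.mono hright))
        (hv.imp (·.mono hright) (·.mono hright))
        (fun s hs => hBu s (hright hs)) (fun s hs => hBv s (hright hs)) ht
    have hold := ih (hu.imp (·.mono hleft) (·.mono hleft))
      (hv.imp (·.mono hleft) (·.mono hleft))
      (huv.mono_set (by rw [uIcc_of_le hax, uIcc_of_le (hax.trans hxy)]; exact hleft))
      (fun s hs => hBu s (hleft hs)) (fun s hs => hBv s (hleft hs))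
    have hyx : y - x = h := by simp only [x, y]; push_cast; ring
    rw [hyx] at hcell
    rw [sum_range_succ, ← intervalIntegral.integral_add_adjacent_intervals
      (huv.mono_set (by rw [uIcc_of_le hax, uIcc_of_le (hax.trans hxy)]; exact hleft))
      (huv.mono_set (by rw [uIcc_of_le hxy, uIcc_of_le (hax.trans hxy)]; exact hright)),
      ← abs_sub_add_abs_sub_eq_of_monotoneOn_or_antitoneOn hu hax hxy,
      ← abs_sub_add_abs_sub_eq_of_monotoneOn_or_antitoneOn hv hax hxy]
    calc _ = |(h * ∑ k ∈ range q, u (a + k * h) * v (a + k * h) - ∫ t in a..x, u t * v t) +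
          (h * (u x * v x) - ∫ t in x..y, u t * v t)| := by congr 1; ring
      _ ≤ _ := (abs_add_le _ _).trans (by nlinarith)

lemma monotoneOn_or_antitoneOn_rpow (γ : ℝ) :
    MonotoneOn (fun t : ℝ => t ^ γ) (Ioi 0) ∨ AntitoneOn (fun t : ℝ => t ^ γ) (Ioi 0) := by
  rcases le_total 0 γ with hγ | hγ
  · exact Or.inl ((Real.monotoneOn_rpow_Ici_of_exponent_nonneg hγ).mono Ioi_subset_Ici_self)
  · exact Or.inr (Real.antitoneOn_rpow_Ioi_of_exponent_nonpos hγ)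

lemma monotoneOn_sub_rpow_of_nonpos {γ : ℝ} (n : ℝ) (hγ : γ ≤ 0) :
    MonotoneOn (fun t : ℝ => (n - t) ^ γ) (Iio n) := fun _ _ _ ht hst =>
  Real.rpow_le_rpow_of_nonpos (sub_pos.2 ht) (by linarith) hγ

lemma rpow_le_max_of_mem_Icc {x y t : ℝ} (γ : ℝ) (hx : 0 < x) (ht : t ∈ Icc x y) :
    t ^ γ ≤ max (x ^ γ) (y ^ γ) := by
  rcases le_total 0 γ with hγ | hγ
  · exact le_max_of_le_right (Real.rpow_le_rpow (hx.le.trans ht.1) ht.2 hγ)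
  · exact le_max_of_le_left (Real.rpow_le_rpow_of_nonpos hx ht.1 hγ)

lemma rpow_le_four_rpow_abs_mul {n t : ℝ} (γ : ℝ) (hn : 0 < n) (ht : t ∈ Icc (n / 4) n) :
    t ^ γ ≤ 4 ^ |γ| * n ^ γ := by
  have hnγ : 0 ≤ n ^ γ := Real.rpow_nonneg hn.le γ
  refine (rpow_le_max_of_mem_Icc γ (by positivity) ht).trans (max_le ?_ ?_)
  · rw [Real.div_rpow hn.le (by norm_num), div_eq_mul_inv, ← Real.rpow_neg (by norm_num),
      mul_comm]
    gcongr
    · norm_num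
    · exact neg_le_abs γ
  · exact le_mul_of_one_le_left hnγ (Real.one_le_rpow (by norm_num) (abs_nonneg γ))

lemma max_one_rpow_mul_div_four_rpow_le {α β n : ℝ} (hβ : 0 ≤ β) (hβα : β ≤ α) (hβ1 : β ≤ 1)
    (hn : 1 ≤ n) :
    max 1 (n ^ (α - 1)) * (n / 4) ^ (β - 1) ≤ 4 * n ^ (α - 1) := by
  have hn0 : 0 < n := by linarith
  have hquarter : (n / 4) ^ (β - 1) ≤ 4 * n ^ (β - 1) := by
    rw [Real.div_rpow hn0.le (by norm_num), div_eq_mul_inv, ← Real.rpow_neg (by norm_num),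
      mul_comm]
    gcongr
    calc (4 : ℝ) ^ (-(β - 1)) ≤ 4 ^ (1 : ℝ) :=
          Real.rpow_le_rpow_of_exponent_le (by norm_num) (by linarith)
      _ = 4 := Real.rpow_one 4
  have hmax : max 1 (n ^ (α - 1)) * n ^ (β - 1) ≤ n ^ (α - 1) := by
    rw [max_mul_of_nonneg _ _ (Real.rpow_nonneg hn0.le _), one_mul, ← Real.rpow_add hn0]
    exact max_le (Real.rpow_le_rpow_of_exponent_le hn (by linarith))
      (Real.rpow_le_rpow_of_exponent_le hn (by linarith))
  calc max 1 (n ^ (α - 1)) * (n / 4) ^ (β - 1)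
      _ ≤ max 1 (n ^ (α - 1)) * (4 * n ^ (β - 1)) := by gcongr
      _ ≤ 4 * n ^ (α - 1) := by nlinarith

lemma continuousOn_rpow_mul_sub_rpow (α β : ℝ) {n x y : ℝ} (hx : 0 < x) (hy : y < n) :
    ContinuousOn (fun t : ℝ => t ^ (α - 1) * (n - t) ^ (β - 1)) (Icc x y) :=
  (continuousOn_id.rpow_const fun t ht => Or.inl (by linarith [ht.1] : 0 < t).ne').mul
    ((continuousOn_const.sub continuousOn_id).rpow_const fun t ht =>
      Or.inl (by linarith [ht.2] : 0 < n - t).ne')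

lemma intervalIntegrable_rpow_mul_sub_rpow {α β n : ℝ} (hα : 0 < α) (hβ : 0 < β) (hn : 0 < n) :
    IntervalIntegrable (fun t : ℝ => t ^ (α - 1) * (n - t) ^ (β - 1)) volume 0 n := by
  have hleft :
      IntervalIntegrable (fun t : ℝ => t ^ (α - 1) * (n - t) ^ (β - 1)) volume 0 (n / 2) :=
    (intervalIntegral.intervalIntegrable_rpow' (by linarith)).mul_continuousOn
      ((continuousOn_const.sub continuousOn_id).rpow_const fun t ht => Or.inl (by
        rw [Set.uIcc_of_le (by positivity)] at ht; exact (by linarith [ht.2] : 0 < n - t).ne'))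
  have hv : IntervalIntegrable (fun t : ℝ => (n - t) ^ (β - 1)) volume (n / 2) n := by
    simpa [sub_half] using ((intervalIntegral.intervalIntegrable_rpow' (a := 0) (b := n / 2)
      (r := β - 1) (by linarith)).comp_sub_left n).symm
  have hright :
      IntervalIntegrable (fun t : ℝ => t ^ (α - 1) * (n - t) ^ (β - 1)) volume (n / 2) n :=
    hv.continuousOn_mul (continuousOn_id.rpow_const fun t ht => Or.inl (by
      rw [Set.uIcc_of_le (by linarith)] at ht; exact (by linarith [ht.1] : 0 < t).ne'))
  exact hleft.trans hright

theorem intervalIntegral_rpow_mul_sub_rpow_eq {α β n : ℝ} (hα : 0 < α) (hβ : 0 < β)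
    (hn : 0 < n) :
    ∫ t in (0:ℝ)..n, t ^ (α - 1) * (n - t) ^ (β - 1) =
      Real.Gamma α * Real.Gamma β / Real.Gamma (α + β) * n ^ (α + β - 1) := by
  have hcast : ((∫ t in (0:ℝ)..n, t ^ (α - 1) * (n - t) ^ (β - 1) : ℝ) : ℂ) =
      ∫ t in (0:ℝ)..n, (t : ℂ) ^ ((α : ℂ) - 1) * ((n : ℂ) - t) ^ ((β : ℂ) - 1) := by
    rw [← intervalIntegral.integral_ofReal]
    refine intervalIntegral.integral_congr fun t ht => ?_
    rw [Set.uIcc_of_le hn.le] at ht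
    simp only [Complex.ofReal_mul, Complex.ofReal_cpow ht.1,
      Complex.ofReal_cpow (sub_nonneg.2 ht.2)]
    push_cast
    rfl
  have hΓ : Complex.Gamma ((α + β : ℝ) : ℂ) ≠ 0 := by
    rw [Complex.Gamma_ofReal]
    exact_mod_cast (Real.Gamma_pos_of_pos (by linarith)).ne'
  have hbeta := Complex.Gamma_mul_Gamma_eq_betaIntegral (s := (α : ℂ)) (t := (β : ℂ))
    (by simpa using hα) (by simpa using hβ)
  apply Complex.ofReal_injective
  rw [hcast, Complex.betaIntegral_scaled _ _ hn]
  push_cast [Complex.ofReal_cpow hn.le, ← Complex.Gamma_ofReal]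
  push_cast at hΓ
  rw [hbeta]
  field_simp

lemma intervalIntegral_rpow_mul_le {γ c B : ℝ} {g : ℝ → ℝ} (hγ : 0 < γ) (hc : 0 ≤ c)
    (hg : ContinuousOn g (Icc 0 c)) (hgB : ∀ t ∈ Icc 0 c, g t ≤ B) :
    ∫ t in (0:ℝ)..c, t ^ (γ - 1) * g t ≤ B * (c ^ γ / γ) := by
  have hint : IntervalIntegrable (fun t : ℝ => t ^ (γ - 1)) volume 0 c :=
    intervalIntegral.intervalIntegrable_rpow' (by linarith)
  calc ∫ t in (0:ℝ)..c, t ^ (γ - 1) * g t ≤ ∫ t in (0:ℝ)..c, t ^ (γ - 1) * B :=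
        intervalIntegral.integral_mono_on hc (hint.mul_continuousOn (by rwa [uIcc_of_le hc]))
          (hint.mul_const B) fun t ht =>
            mul_le_mul_of_nonneg_left (hgB t ht) (Real.rpow_nonneg ht.1 _)
    _ = B * (c ^ γ / γ) := by
        rw [intervalIntegral.integral_mul_const, integral_rpow (Or.inl (by linarith)),
          sub_add_cancel, Real.zero_rpow hγ.ne']
        ring

lemma intervalIntegral_rpow_mul_sub_rpow_le_left {α β n c h : ℝ} (hβ : 0 < β) (hβα : β ≤ α)
    (hβ1 : β ≤ 1) (hc : 0 ≤ c) (hch : c ≤ h) (hn : 1 ≤ n) (hhn : 4 * h ≤ n) :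
    ∫ t in (0:ℝ)..c, t ^ (α - 1) * (n - t) ^ (β - 1) ≤ 4 * (h ^ α / α) * n ^ (α - 1) := by
  have hα : 0 < α := hβ.trans_le hβα
  have hv : ∀ t ∈ Icc 0 c, (n - t) ^ (β - 1) ≤ 4 * n ^ (α - 1) := fun t ht =>
    (Real.rpow_le_rpow_of_nonpos (by linarith) (by linarith [ht.2]) (by linarith)).trans
      ((le_mul_of_one_le_left (Real.rpow_nonneg (by linarith) _) (le_max_left 1 _)).trans
        (max_one_rpow_mul_div_four_rpow_le hβ.le hβα hβ1 hn))
  calc _ ≤ 4 * n ^ (α - 1) * (c ^ α / α) := intervalIntegral_rpow_mul_le hα hc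
        ((continuousOn_const.sub continuousOn_id).rpow_const fun t ht =>
          Or.inl (by linarith [ht.2] : 0 < n - t).ne') hv
    _ ≤ 4 * n ^ (α - 1) * (h ^ α / α) := by gcongr
    _ = _ := by ring

lemma intervalIntegral_rpow_mul_sub_rpow_le_right {α β n c h : ℝ} (hβ : 0 < β) (hc : n - h ≤ c)
    (hcn : c ≤ n) (hn : 0 < n) (hhn : 4 * h ≤ n) :
    ∫ t in c..n, t ^ (α - 1) * (n - t) ^ (β - 1) ≤ 4 ^ |α - 1| * (h ^ β / β) * n ^ (α - 1) := by
  have hreflect : ∫ t in c..n, t ^ (α - 1) * (n - t) ^ (β - 1) =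
      ∫ s in (0:ℝ)..(n - c), s ^ (β - 1) * (n - s) ^ (α - 1) := by
    simpa [mul_comm] using intervalIntegral.integral_comp_sub_left (a := c) (b := n)
      (fun s : ℝ => s ^ (β - 1) * (n - s) ^ (α - 1)) n
  rw [hreflect]
  calc _ ≤ 4 ^ |α - 1| * n ^ (α - 1) * ((n - c) ^ β / β) :=
        intervalIntegral_rpow_mul_le (g := fun s => (n - s) ^ (α - 1)) hβ (by linarith)
          ((continuousOn_const.sub continuousOn_id).rpow_const fun s hs =>
            Or.inl (by linarith [hs.2] : 0 < n - s).ne')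
          fun s hs => rpow_le_four_rpow_abs_mul _ hn ⟨by linarith [hs.2], by linarith [hs.1]⟩
    _ ≤ 4 ^ |α - 1| * n ^ (α - 1) * (h ^ β / β) := by gcongr; linarith
    _ = _ := by ring

lemma abs_riemannSum_rpow_mul_sub_rpow_sub_integral_le {α β n a h x y : ℝ} (hβ1 : β ≤ 1)
    (hh : 0 ≤ h) (q : ℕ) (hx : 0 < x) (hxa : x ≤ a) (hy : a + q * h ≤ y) (hyn : y < n) :
    |h * ∑ k ∈ range q, (a + k * h) ^ (α - 1) * (n - (a + k * h)) ^ (β - 1) -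
        ∫ t in a..(a + q * h), t ^ (α - 1) * (n - t) ^ (β - 1)| ≤
      4 * h * (max (x ^ (α - 1)) (n ^ (α - 1)) * (n - y) ^ (β - 1)) := by
  set Bu := max (x ^ (α - 1)) (n ^ (α - 1))
  set Bv := (n - y) ^ (β - 1)
  have ha : a ≤ a + q * h := le_add_of_nonneg_right (by positivity)
  have hsub : Icc a (a + q * h) ⊆ Icc x y := Icc_subset_Icc hxa hy
  have hpos : Icc a (a + q * h) ⊆ Ioi 0 := fun t ht => hx.trans_le (hsub ht).1
  have hltn : Icc a (a + q * h) ⊆ Iio n := fun t ht => (hsub ht).2.trans_lt hyn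
  have hBu : ∀ t ∈ Icc a (a + q * h), |t ^ (α - 1)| ≤ Bu := fun t ht => by
    rw [abs_of_nonneg (Real.rpow_nonneg (hpos ht).le _)]
    exact rpow_le_max_of_mem_Icc _ hx ⟨(hsub ht).1, (hsub ht).2.trans hyn.le⟩
  have hBv : ∀ t ∈ Icc a (a + q * h), |(n - t) ^ (β - 1)| ≤ Bv := fun t ht => by
    rw [abs_of_nonneg (Real.rpow_nonneg (sub_pos.2 (hltn ht)).le _)]
    exact Real.rpow_le_rpow_of_nonpos (sub_pos.2 hyn) (by linarith [(hsub ht).2]) (by linarith)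
  have hend : a + q * h ∈ Icc a (a + q * h) := ⟨ha, le_rfl⟩
  have hstart : a ∈ Icc a (a + q * h) := ⟨le_rfl, ha⟩
  have hmain := abs_riemannSum_mul_sub_integral_le hh q
    ((monotoneOn_or_antitoneOn_rpow (α - 1)).imp (·.mono hpos) (·.mono hpos))
    (Or.inl ((monotoneOn_sub_rpow_of_nonpos n (by linarith)).mono hltn))
    ((continuousOn_rpow_mul_sub_rpow α β (hx.trans_le hxa)
      (hy.trans_lt hyn)).intervalIntegrable_of_Icc ha)
    hBu hBv
  have hvar_v := (abs_sub _ _).trans (add_le_add (hBv _ hend) (hBv _ hstart))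
  have hvar_u := (abs_sub _ _).trans (add_le_add (hBu _ hend) (hBu _ hstart))
  have hBu0 : 0 ≤ Bu := (abs_nonneg _).trans (hBu a hstart)
  have hBv0 : 0 ≤ Bv := (abs_nonneg _).trans (hBv a hstart)
  refine hmain.trans ?_
  calc h * (Bu * |(n - (a + q * h)) ^ (β - 1) - (n - a) ^ (β - 1)| +
        Bv * |(a + q * h) ^ (α - 1) - a ^ (α - 1)|)
      _ ≤ h * (Bu * (Bv + Bv) + Bv * (Bu + Bu)) := by gcongr
      _ = 4 * h * (Bu * Bv) := by ring

lemma abs_riemannSum_rpow_mul_sub_rpow_sub_integral_le_of_grid {α β a h n : ℝ} (hβ : 0 ≤ β)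
    (hβα : β ≤ α) (hβ1 : β ≤ 1) (q : ℕ) (ha : 1 ≤ a) (hah : a ≤ h) (hqn : a + q * h ≤ n - 1)
    (hnq : n ≤ a + q * h + h) (hn : 4 * h ≤ n) :
    |h * ∑ k ∈ range q, (a + k * h) ^ (α - 1) * (n - (a + k * h)) ^ (β - 1) -
        ∫ t in a..(a + q * h), t ^ (α - 1) * (n - t) ^ (β - 1)| ≤
      h * ((16 + 4 * 4 ^ |α - 1|) * n ^ (α - 1)) := by
  set M := q / 2
  set b := a + M * h
  have hq : q = M + (q - M) := by omega
  have hqM : (q : ℝ) = M + (q - M : ℕ) := by exact_mod_cast hq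
  have hMq : (q : ℝ) ≤ 2 * M + 1 := by exact_mod_cast (by omega : q ≤ 2 * M + 1)
  have hMq' : 2 * (M : ℝ) ≤ q := by exact_mod_cast (by omega : 2 * M ≤ q)
  have hh : 0 ≤ h := by linarith
  have hn1 : 1 ≤ n := by linarith
  have hb_lo : n / 4 ≤ b := by nlinarith
  have hb_hi : b ≤ 3 * n / 4 := by nlinarith
  have hend : a + q * h = b + (q - M : ℕ) * h := by rw [hqM]; ring
  have hfirst := abs_riemannSum_rpow_mul_sub_rpow_sub_integral_le (α := α) (n := n)
    (y := 3 * n / 4) hβ1 hh M one_pos ha hb_hi (by linarith)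
  have hsecond := abs_riemannSum_rpow_mul_sub_rpow_sub_integral_le (α := α) (n := n) (a := b)
    (x := n / 4) (y := n - 1) hβ1 hh (q - M) (by linarith) hb_lo (hend.symm.le.trans hqn)
    (by linarith)
  rw [Real.one_rpow, show n - 3 * n / 4 = n / 4 by ring] at hfirst
  rw [sub_sub_cancel, Real.one_rpow, mul_one] at hsecond
  have hK : max ((n / 4) ^ (α - 1)) (n ^ (α - 1)) ≤ 4 ^ |α - 1| * n ^ (α - 1) :=
    max_le (rpow_le_four_rpow_abs_mul _ (by linarith) ⟨le_rfl, by linarith⟩)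
      (rpow_le_four_rpow_abs_mul _ (by linarith) ⟨by linarith, le_rfl⟩)
  have hint : ∀ x y, a ≤ x → x ≤ y → y ≤ a + q * h →
      IntervalIntegrable (fun t : ℝ => t ^ (α - 1) * (n - t) ^ (β - 1)) volume x y :=
    fun x y hax hxy hy => (continuousOn_rpow_mul_sub_rpow α β (by linarith : 0 < x)
      (by linarith : y < n)).intervalIntegrable_of_Icc hxy
  have hsum : ∑ k ∈ range q, (a + k * h) ^ (α - 1) * (n - (a + k * h)) ^ (β - 1) =
      ∑ k ∈ range M, (a + k * h) ^ (α - 1) * (n - (a + k * h)) ^ (β - 1) +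
        ∑ k ∈ range (q - M), (b + k * h) ^ (α - 1) * (n - (b + k * h)) ^ (β - 1) := by
    conv_lhs => rw [hq, sum_range_add]
    push_cast
    simp only [b, add_mul, add_assoc]
  have hsplit := intervalIntegral.integral_add_adjacent_intervals
    (hint a b le_rfl (by linarith) (by linarith))
    (hint b (a + q * h) (by linarith) (by linarith) le_rfl)
  rw [hsum, ← hsplit, hend]
  calc _ = |(h * ∑ k ∈ range M, (a + k * h) ^ (α - 1) * (n - (a + k * h)) ^ (β - 1) -
          ∫ t in a..b, t ^ (α - 1) * (n - t) ^ (β - 1)) +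
        (h * ∑ k ∈ range (q - M), (b + k * h) ^ (α - 1) * (n - (b + k * h)) ^ (β - 1) -
          ∫ t in b..(b + (q - M : ℕ) * h), t ^ (α - 1) * (n - t) ^ (β - 1))| := by
        congr 1; ring
    _ ≤ _ := (abs_add_le _ _).trans ?_
  nlinarith [max_one_rpow_mul_div_four_rpow_le hβ hβα hβ1 hn1]

lemma sum_range_succ_sub_intervalIntegral_div_eq {f : ℝ → ℝ} {a h n : ℝ} (q : ℕ) (hh : h ≠ 0)
    (hf : IntervalIntegrable f volume 0 n) (ha : 0 ≤ a) (hae : a ≤ a + q * h)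
    (hen : a + q * h ≤ n) :
    ∑ k ∈ range (q + 1), f (a + k * h) - (∫ t in (0:ℝ)..n, f t) / h =
      (h * ∑ k ∈ range q, f (a + k * h) - ∫ t in a..(a + q * h), f t) / h + f (a + q * h) -
        (∫ t in (0:ℝ)..a, f t) / h - (∫ t in (a + q * h)..n, f t) / h := by
  have hint : ∀ x y, 0 ≤ x → x ≤ y → y ≤ n → IntervalIntegrable f volume x y :=
    fun x y hx hxy hy => hf.mono_set (by
      rw [uIcc_of_le hxy, uIcc_of_le (hx.trans (hxy.trans hy))]; exact Icc_subset_Icc hx hy)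
  rw [sum_range_succ, ← intervalIntegral.integral_add_adjacent_intervals
      (hint 0 _ le_rfl (ha.trans hae) hen) (hint _ n (ha.trans hae) hen le_rfl),
    ← intervalIntegral.integral_add_adjacent_intervals (hint 0 a le_rfl ha (hae.trans hen))
      (hint a _ ha hae hen),
    sub_div (h * _), mul_div_cancel_left₀ _ hh]
  ring

theorem abs_sum_rpow_mul_sub_rpow_sub_le {α β a h n : ℝ} (hβ : 0 < β) (hβα : β ≤ α)
    (hβ1 : β ≤ 1) (q : ℕ) (ha : 1 ≤ a) (hah : a ≤ h) (hqn : a + q * h ≤ n - 1)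
    (hnq : n ≤ a + q * h + h) (hn : 4 * h ≤ n) :
    |∑ k ∈ range (q + 1), (a + k * h) ^ (α - 1) * (n - (a + k * h)) ^ (β - 1) -
        Real.Gamma α * Real.Gamma β / Real.Gamma (α + β) * n ^ (α + β - 1) / h| ≤
      (16 + 5 * 4 ^ |α - 1| + 4 * (h ^ α / α) + 4 ^ |α - 1| * (h ^ β / β)) * n ^ (α - 1) := by
  have hα : 0 < α := hβ.trans_le hβα
  have hn0 : 0 < n := by linarith
  have hh : 0 < h := by linarith
  have hae : a ≤ a + q * h := le_add_of_nonneg_right (mul_nonneg q.cast_nonneg hh.le)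
  have hgrid := abs_riemannSum_rpow_mul_sub_rpow_sub_integral_le_of_grid hβ.le hβα hβ1 q ha hah
    hqn hnq hn
  have hleft := intervalIntegral_rpow_mul_sub_rpow_le_left hβ hβα hβ1 (by linarith) hah
    (by linarith) hn
  have hright := intervalIntegral_rpow_mul_sub_rpow_le_right (α := α) (c := a + q * h) hβ
    (by linarith) (by linarith) hn0 hn
  have hlast : (a + q * h) ^ (α - 1) * (n - (a + q * h)) ^ (β - 1) ≤ 4 ^ |α - 1| * n ^ (α - 1) :=
    (mul_le_of_le_one_right (Real.rpow_nonneg (by linarith) _)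
      (Real.rpow_le_one_of_one_le_of_nonpos (by linarith) (by linarith))).trans
      (rpow_le_four_rpow_abs_mul _ hn0 ⟨by linarith, by linarith⟩)
  have hdecomp := sum_range_succ_sub_intervalIntegral_div_eq (a := a) q hh.ne'
    (intervalIntegrable_rpow_mul_sub_rpow hα hβ hn0) (by linarith) hae (by linarith)
  beta_reduce at hdecomp
  rw [← intervalIntegral_rpow_mul_sub_rpow_eq hα hβ hn0, hdecomp]
  set e := a + q * h
  have hnonneg : ∀ x y, 0 ≤ x → x ≤ y → y ≤ n →
      0 ≤ ∫ t in x..y, t ^ (α - 1) * (n - t) ^ (β - 1) := fun x y hx hxy hy =>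
    intervalIntegral.integral_nonneg hxy fun t ht =>
      mul_nonneg (Real.rpow_nonneg (hx.trans ht.1) _) (Real.rpow_nonneg (by linarith [ht.2]) _)
  have h0 := hnonneg 0 a le_rfl (by linarith) (by linarith)
  have h1 := hnonneg e n (by linarith) (by linarith) le_rfl
  set X := h * ∑ k ∈ range q, (a + k * h) ^ (α - 1) * (n - (a + k * h)) ^ (β - 1) -
    ∫ t in a..e, t ^ (α - 1) * (n - t) ^ (β - 1)
  have hgrid' : |X / h| ≤ (16 + 4 * 4 ^ |α - 1|) * n ^ (α - 1) := by
    rw [abs_div, abs_of_pos hh, div_le_iff₀ hh]; linarith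
  have := abs_le.mp hgrid'
  have := div_le_self h0 (by linarith : 1 ≤ h)
  have := div_le_self h1 (by linarith : 1 ≤ h)
  have := div_nonneg h0 hh.le
  have := div_nonneg h1 hh.le
  have : 0 ≤ e ^ (α - 1) * (n - e) ^ (β - 1) :=
    mul_nonneg (Real.rpow_nonneg (by linarith) _) (Real.rpow_nonneg (by linarith) _)
  rw [abs_le]
  constructor <;> linarith

lemma filter_mod_eq_eq_image {L r m₀ q n : ℕ} (hL : 0 < L) (hm₀ : 0 < m₀) (hm₀L : m₀ ≤ L)
    (hm₀r : m₀ % L = r) (hqn : m₀ + q * L < n) (hnq : n ≤ m₀ + q * L + L) :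
    (Finset.Ioo 0 n).filter (fun m => m % L = r) =
      (Finset.range (q + 1)).image (fun k => m₀ + k * L) := by
  ext m
  simp only [Finset.mem_filter, Finset.mem_Ioo, Finset.mem_image, Finset.mem_range]
  constructor
  · rintro ⟨⟨hm, hmn⟩, hmr⟩
    have hm₀m : m₀ ≤ m := by
      by_contra! hlt
      have hmL : m % L = m := Nat.mod_eq_of_lt (hlt.trans_le hm₀L)
      rcases hm₀L.lt_or_eq with hm₀L | rfl
      · rw [Nat.mod_eq_of_lt hm₀L] at hm₀r
        omega
      · rw [Nat.mod_self] at hm₀r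
        omega
    obtain ⟨k, hk⟩ : L ∣ m - m₀ := (Nat.modEq_iff_dvd' hm₀m).mp (hm₀r.trans hmr.symm)
    refine ⟨k, ?_, by rw [mul_comm]; omega⟩
    have : k * L < (q + 1) * L := by rw [add_mul, one_mul, mul_comm]; omega
    exact Nat.lt_of_mul_lt_mul_right this
  · rintro ⟨k, hk, rfl⟩
    refine ⟨⟨by omega, ?_⟩, by rw [Nat.add_mul_mod_self_right, hm₀r]⟩
    have : k * L ≤ q * L := Nat.mul_le_mul_right L (by omega)
    omega

theorem stmt_5 (L r : ℕ) (hL : 1 ≤ L) (hr : r < L)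
    (α β : ℝ) (hβ : 0 < β) (hβα : β ≤ α) (hβ1 : β ≤ 1) :
    ∃ C : ℝ, 0 < C ∧ ∃ N : ℕ, ∀ n : ℕ, N ≤ n →
      |(∑ m ∈ (Finset.Ioo 0 n).filter (fun m => m % L = r),
          (m : ℝ) ^ (α - 1) * ((n : ℝ) - m) ^ (β - 1)) -
        Real.Gamma α * Real.Gamma β / Real.Gamma (α + β) * (n : ℝ) ^ (α + β - 1) / L| ≤
        C * (n : ℝ) ^ (α - 1) := by
  have hα : 0 < α := hβ.trans_le hβα
  refine ⟨16 + 5 * 4 ^ |α - 1| + 4 * ((L : ℝ) ^ α / α) + 4 ^ |α - 1| * ((L : ℝ) ^ β / β),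
    by positivity, 4 * L, fun n hn => ?_⟩
  obtain ⟨m₀, hm₀, hm₀L, hm₀r⟩ : ∃ m₀, 0 < m₀ ∧ m₀ ≤ L ∧ m₀ % L = r := by
    by_cases hr0 : r = 0
    · exact ⟨L, hL, le_rfl, by rw [Nat.mod_self, hr0]⟩
    · exact ⟨r, Nat.pos_of_ne_zero hr0, hr.le, Nat.mod_eq_of_lt hr⟩
  have hdiv := Nat.div_mul_le_self (n - 1 - m₀) L
  have hlt := Nat.lt_div_mul_add (a := n - 1 - m₀) hL
  generalize (n - 1 - m₀) / L = q at hdiv hlt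
  have hqn : m₀ + q * L + 1 ≤ n := by omega
  have hnq : n ≤ m₀ + q * L + L := by omega
  rw [filter_mod_eq_eq_image hL hm₀ hm₀L hm₀r (by omega) hnq,
    sum_image fun x _ y _ hxy => Nat.eq_of_mul_eq_mul_right hL (by omega)]
  push_cast
  have hqn' : (m₀ : ℝ) + q * L + 1 ≤ n := by exact_mod_cast hqn
  exact abs_sum_rpow_mul_sub_rpow_sub_le hβ hβα hβ1 q (by exact_mod_cast hm₀)
    (by exact_mod_cast hm₀L) (by linarith) (by exact_mod_cast hnq) (by exact_mod_cast hn)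
end

section
/- (Disjointness lemma) Let (Ω, Pr) be a probability space arising as a product of independent events, let E_1, E_2, …, E_n be events each of which is the conjunction of a finite set S_i of independent atomic events, and define a family {E_i : i ∈ J} to be disjoint if the index sets S_i for i ∈ J are pairwise disjoint. Then for every integer k ≥ 1, the probability that there exists a disjoint subfamily of size k is at most (Σ_i Pr(E_i))^k / k!. -/
/-! For a disjoint subfamily `J`, the event `⋂_{i ∈ J} E_i` is the intersection of the atoms in
the disjoint union of the `S_i`, so independence gives it probability `∏_{i ∈ J} Pr(E_i)`. A union
bound over the disjoint `k`-subfamilies thus bounds the probability by the elementary symmetric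
sum `e_k` of the `Pr(E_i)`. Finally `k! e_k ≤ (∑ Pr(E_i))^k`: read as 0/1 exponent vectors, the
`k`-subsets index terms of the multinomial expansion of `(∑ Pr(E_i))^k`, each with coefficient
exactly `k!`, and all other terms are nonnegative. -/

open MeasureTheory ProbabilityTheory

open scoped Nat

namespace Finset

variable {ι R : Type*} [DecidableEq ι]

lemma multinomial_indicator_eq_factorial {s J : Finset ι} (hJ : J ⊆ s) :
    Nat.multinomial s (fun i ↦ if i ∈ J then 1 else 0) = J.card ! := by
  have hspec := Nat.multinomial_spec s (fun i ↦ if i ∈ J then 1 else 0)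
  rwa [prod_eq_one fun i _ ↦ by split_ifs <;> rfl, one_mul, sum_boole, Nat.cast_id,
    filter_mem_eq_inter, inter_eq_right.2 hJ] at hspec

lemma prod_pow_indicator_eq_prod [CommMonoid R] {s J : Finset ι} (hJ : J ⊆ s) (f : ι → R) :
    ∏ i ∈ s, f i ^ (if i ∈ J then 1 else 0) = ∏ i ∈ J, f i := by
  simp_rw [pow_ite, pow_one, pow_zero]
  rw [prod_ite_mem, inter_eq_right.2 hJ]

lemma factorial_mul_sum_powersetCard_prod_le_sum_pow [CommSemiring R] [PartialOrder R]
    [IsOrderedRing R] {s : Finset ι} {f : ι → R} (hf : ∀ i ∈ s, 0 ≤ f i) (k : ℕ) :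
    (k ! : R) * ∑ J ∈ s.powersetCard k, ∏ i ∈ J, f i ≤ (∑ i ∈ s, f i) ^ k := by
  classical
  set indicator : Finset ι → ι → ℕ := fun J i ↦ if i ∈ J then 1 else 0
  have hinj : Set.InjOn indicator (s.powersetCard k) := fun J₁ _ J₂ _ h ↦ by
    ext i
    have := congrFun h i
    by_cases h₁ : i ∈ J₁ <;> by_cases h₂ : i ∈ J₂ <;> simp_all [indicator]
  have hmaps : ∀ J ∈ s.powersetCard k, indicator J ∈ s.piAntidiag k := fun J hJ ↦ by
    obtain ⟨hJs, rfl⟩ := mem_powersetCard.1 hJ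
    refine mem_piAntidiag.2 ⟨by simp [indicator, inter_eq_right.2 hJs], fun i hi ↦ hJs ?_⟩
    by_contra hiJ
    exact hi (if_neg hiJ)
  have hterm : ∀ J ∈ s.powersetCard k, (k ! : R) * ∏ i ∈ J, f i =
      Nat.multinomial s (indicator J) * ∏ i ∈ s, f i ^ indicator J i := fun J hJ ↦ by
    obtain ⟨hJs, rfl⟩ := mem_powersetCard.1 hJ
    rw [multinomial_indicator_eq_factorial hJs, prod_pow_indicator_eq_prod hJs]
  calc (k ! : R) * ∑ J ∈ s.powersetCard k, ∏ i ∈ J, f i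
      = ∑ m ∈ (s.powersetCard k).image indicator,
          Nat.multinomial s m * ∏ i ∈ s, f i ^ m i := by
        rw [mul_sum, sum_image hinj]
        exact sum_congr rfl hterm
    _ ≤ ∑ m ∈ s.piAntidiag k, Nat.multinomial s m * ∏ i ∈ s, f i ^ m i := by
        refine sum_le_sum_of_subset_of_nonneg (image_subset_iff.2 hmaps) fun m _ _ ↦ ?_
        have := prod_nonneg fun i hi ↦ pow_nonneg (hf i hi) (m i)
        positivity
    _ = (∑ i ∈ s, f i) ^ k := (sum_pow_eq_sum_piAntidiag s f k).symm

end Finset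

namespace ProbabilityTheory.iIndepSet

variable {Ω ι κ : Type*} [MeasurableSpace Ω] {μ : Measure Ω} {A : ι → Set Ω}

lemma measure_biInter_biInter_of_pairwiseDisjoint [DecidableEq ι] (hA : iIndepSet A μ)
    {J : Finset κ} {S : κ → Finset ι} (hS : (J : Set κ).PairwiseDisjoint S) :
    μ (⋂ i ∈ J, ⋂ j ∈ S i, A j) = ∏ i ∈ J, μ (⋂ j ∈ S i, A j) := by
  rw [← Finset.set_biInter_biUnion, hA.meas_biInter, Finset.prod_biUnion hS]
  simp_rw [hA.meas_biInter]

lemma factorial_mul_measure_exists_pairwiseDisjoint_le [Fintype κ] (hA : iIndepSet A μ)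
    (S : κ → Finset ι) (k : ℕ) :
    k ! * μ {x | ∃ J : Finset κ, J.card = k ∧ (J : Set κ).PairwiseDisjoint S ∧
        ∀ i ∈ J, x ∈ ⋂ j ∈ S i, A j} ≤ (∑ i, μ (⋂ j ∈ S i, A j)) ^ k := by
  classical
  set T := (Finset.univ.powersetCard k).filter fun J : Finset κ ↦ (J : Set κ).PairwiseDisjoint S
  have hsub : {x | ∃ J : Finset κ, J.card = k ∧ (J : Set κ).PairwiseDisjoint S ∧
      ∀ i ∈ J, x ∈ ⋂ j ∈ S i, A j} ⊆ ⋃ J ∈ T, ⋂ i ∈ J, ⋂ j ∈ S i, A j := by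
    rintro x ⟨J, hcard, hdisj, hx⟩
    exact Set.mem_biUnion (Finset.mem_filter.2 ⟨Finset.mem_powersetCard_univ.2 hcard, hdisj⟩)
      (Set.mem_iInter₂.2 hx)
  calc k ! * μ _
      ≤ k ! * ∑ J ∈ T, μ (⋂ i ∈ J, ⋂ j ∈ S i, A j) := by
        gcongr
        exact (measure_mono hsub).trans (measure_biUnion_finset_le T _)
    _ = k ! * ∑ J ∈ T, ∏ i ∈ J, μ (⋂ j ∈ S i, A j) := by
        congr 1
        exact Finset.sum_congr rfl fun J hJ ↦
          hA.measure_biInter_biInter_of_pairwiseDisjoint (Finset.mem_filter.1 hJ).2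
    _ ≤ k ! * ∑ J ∈ Finset.univ.powersetCard k, ∏ i ∈ J, μ (⋂ j ∈ S i, A j) := by
        gcongr
        exact Finset.filter_subset _ _
    _ ≤ (∑ i, μ (⋂ j ∈ S i, A j)) ^ k :=
        Finset.factorial_mul_sum_powersetCard_prod_le_sum_pow (fun _ _ ↦ zero_le) k

end ProbabilityTheory.iIndepSet

theorem stmt_10_general {Ω : Type*} [MeasurableSpace Ω] (μ : Measure Ω) [IsProbabilityMeasure μ]
    {ι : Type*} (A : ι → Set Ω) (hind : iIndepSet A μ)
    (n : ℕ) (S : Fin n → Finset ι) (E : Fin n → Set Ω)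
    (hE : ∀ i, E i = ⋂ j ∈ S i, A j) (k : ℕ) :
    (μ {x | ∃ J : Finset (Fin n), J.card = k ∧
        (∀ i ∈ J, ∀ j ∈ J, i ≠ j → Disjoint (S i) (S j)) ∧ ∀ i ∈ J, x ∈ E i}).toReal ≤
      (∑ i, (μ (E i)).toReal) ^ k / k.factorial := by
  obtain rfl : E = fun i ↦ ⋂ j ∈ S i, A j := funext hE
  have hsum_ne_top : ∑ i, μ (⋂ j ∈ S i, A j) ≠ ⊤ :=
    ENNReal.sum_ne_top.2 fun _ _ ↦ measure_ne_top _ _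
  have hbound := ENNReal.toReal_mono (ENNReal.pow_ne_top hsum_ne_top)
    (hind.factorial_mul_measure_exists_pairwiseDisjoint_le S k)
  rw [le_div_iff₀ (by positivity), mul_comm]
  simp only [ENNReal.toReal_mul, ENNReal.toReal_pow, ENNReal.toReal_natCast,
    ENNReal.toReal_sum fun _ _ ↦ measure_ne_top _ _] at hbound
  -- `Set.PairwiseDisjoint` unfolds to the disjointness condition of the statement.
  exact hbound

theorem stmt_10 {Ω : Type*} [MeasurableSpace Ω] (μ : Measure Ω) [IsProbabilityMeasure μ]
    {ι : Type*} (A : ι → Set Ω) (hA : ∀ i, MeasurableSet (A i)) (hind : iIndepSet A μ)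
    (n : ℕ) (S : Fin n → Finset ι) (E : Fin n → Set Ω)
    (hE : ∀ i, E i = ⋂ j ∈ S i, A j) (k : ℕ) (hk : 1 ≤ k) :
    (μ {x | ∃ J : Finset (Fin n), J.card = k ∧
        (∀ i ∈ J, ∀ j ∈ J, i ≠ j → Disjoint (S i) (S j)) ∧ ∀ i ∈ J, x ∈ E i}).toReal ≤
      (∑ i, (μ (E i)).toReal) ^ k / k.factorial :=
  stmt_10_general μ A hind n S E hE k
end

section
/- (Kochen–Stone) Let {E_n} be events in a probability space with Σ_n Pr(E_n) = ∞. Then Pr(E_n occurs for infinitely many n) ≥ limsup_{N→∞} (Σ_{1≤n,m≤N} Pr(E_n)Pr(E_m)) / (Σ_{1≤n,m≤N} Pr(E_n ∧ E_m)). -/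
open MeasureTheory Filter Topology
open scoped ENNReal

/-!
Write `S N = ∑_{n<N} P(E n)` and `D N = ∑_{n,m<N} P(E n ∩ E m)`. Cauchy–Schwarz applied to
`f = ∑_{n∈s} 1_{E n} = f · 1_{⋃_{n∈s} E n}` gives the second-moment bound
`(∑_{n∈s} P(E n))² ≤ P(⋃_{n∈s} E n) · ∑_{n,m∈s} P(E n ∩ E m)`.
With `s = range N` it gives `S N² ≤ D N`; with `s = [k, N)` it gives
`(S N - S k)² ≤ P(⋃_{n≥k} E n) · D N`. Since `S N → ∞`, the first bound makes the contribution
of the first `k` events to `S N² / D N` of order `S k / S N`, so the limsup of the ratio is at most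
`P(⋃_{n≥k} E n)`, which decreases to `P(limsup E)` as `k → ∞`.
-/

section SecondMoment

variable {Ω : Type*} [MeasurableSpace Ω] (μ : Measure Ω)

theorem sq_lintegral_le_measure_mul_lintegral_sq {f : Ω → ℝ≥0∞} (hf : AEMeasurable f μ)
    {U : Set Ω} (hU : MeasurableSet U) (hfU : ∀ x ∉ U, f x = 0) :
    (∫⁻ x, f x ∂μ) ^ 2 ≤ μ U * ∫⁻ x, f x ^ 2 ∂μ := by
  have hf_eq : f = f * U.indicator 1 := by
    ext x; by_cases hx : x ∈ U <;> simp [hx, hfU]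
  have hU_sq : ∫⁻ x, U.indicator 1 x ^ (2 : ℝ) ∂μ = μ U := by
    rw [← lintegral_indicator_one hU]; congr 1; ext x; by_cases hx : x ∈ U <;> simp [hx]
  have holder := ENNReal.lintegral_mul_le_Lp_mul_Lq μ Real.HolderConjugate.two_two hf
    ((measurable_one.indicator hU).aemeasurable (μ := μ))
  rw [← hf_eq, hU_sq] at holder
  have sqrt_sq : ∀ a : ℝ≥0∞, (a ^ (1 / 2 : ℝ)) ^ 2 = a := fun a => by
    simpa using ENNReal.rpow_inv_natCast_pow two_ne_zero a
  calc (∫⁻ x, f x ∂μ) ^ 2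
      ≤ ((∫⁻ x, f x ^ (2 : ℝ) ∂μ) ^ (1 / 2 : ℝ) * μ U ^ (1 / 2 : ℝ)) ^ 2 := by gcongr
    _ = μ U * ∫⁻ x, f x ^ 2 ∂μ := by simp only [mul_pow, sqrt_sq, ENNReal.rpow_two, mul_comm]

theorem lintegral_sum_indicator_one {ι : Type*} (s : Finset ι) {E : ι → Set Ω}
    (hE : ∀ i ∈ s, MeasurableSet (E i)) :
    ∫⁻ x, ∑ i ∈ s, (E i).indicator 1 x ∂μ = ∑ i ∈ s, μ (E i) := by
  rw [lintegral_finsetSum _ fun i hi => measurable_one.indicator (hE i hi)]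
  exact Finset.sum_congr rfl fun i hi => lintegral_indicator_one (hE i hi)

theorem sq_sum_measure_le_measure_biUnion_mul_sum_inter {ι : Type*} (s : Finset ι)
    {E : ι → Set Ω} (hE : ∀ i ∈ s, MeasurableSet (E i)) :
    (∑ i ∈ s, μ (E i)) ^ 2 ≤ μ (⋃ i ∈ s, E i) * ∑ i ∈ s, ∑ j ∈ s, μ (E i ∩ E j) := by
  set f : Ω → ℝ≥0∞ := fun x => ∑ i ∈ s, (E i).indicator 1 x
  have hf : Measurable f := Finset.measurable_sum _ fun i hi => measurable_one.indicator (hE i hi)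
  have hfU : ∀ x ∉ ⋃ i ∈ s, E i, f x = 0 := by
    intro x hx
    simp only [Set.mem_iUnion, not_exists] at hx
    exact Finset.sum_eq_zero fun i hi => Set.indicator_of_notMem (hx i hi) _
  have hf_sq : ∀ x, f x ^ 2 = ∑ i ∈ s, ∑ j ∈ s, (E i ∩ E j).indicator 1 x := by
    intro x
    simp only [f, sq, Finset.sum_mul_sum, Set.inter_indicator_one, Pi.mul_apply]
  have hEE : ∀ i ∈ s, ∀ j ∈ s, MeasurableSet (E i ∩ E j) := fun i hi j hj =>
    (hE i hi).inter (hE j hj)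
  convert sq_lintegral_le_measure_mul_lintegral_sq μ hf.aemeasurable
    (s.measurableSet_biUnion hE) hfU using 2
  · exact (lintegral_sum_indicator_one μ s hE).symm
  · simp_rw [hf_sq]
    rw [lintegral_finsetSum _ fun i hi => Finset.measurable_sum _ fun j hj =>
      measurable_one.indicator (hEE i hi j hj)]
    exact Finset.sum_congr rfl fun i hi => (lintegral_sum_indicator_one μ s (hEE i hi)).symm

theorem sq_sum_measureReal_le_measureReal_biUnion_mul_sum_inter [IsFiniteMeasure μ] {ι : Type*}
    (s : Finset ι) {E : ι → Set Ω} (hE : ∀ i ∈ s, MeasurableSet (E i)) :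
    (∑ i ∈ s, μ.real (E i)) ^ 2 ≤
      μ.real (⋃ i ∈ s, E i) * ∑ i ∈ s, ∑ j ∈ s, μ.real (E i ∩ E j) := by
  have := ENNReal.toReal_mono (by simp [ENNReal.mul_eq_top])
    (sq_sum_measure_le_measure_biUnion_mul_sum_inter μ s hE)
  simpa [ENNReal.toReal_sum, measureReal_def] using this

theorem tendsto_measureReal_iUnion_ge_limsup [IsFiniteMeasure μ] {E : ℕ → Set Ω}
    (hE : ∀ n, MeasurableSet (E n)) :
    Tendsto (fun k => μ.real (⋃ n ≥ k, E n)) atTop (𝓝 (μ.real (limsup E atTop))) := by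
  rw [limsup_eq_iInf_iSup_of_nat]
  simp only [Set.iInf_eq_iInter, Set.iSup_eq_iUnion]
  exact (ENNReal.tendsto_toReal (measure_ne_top _ _)).comp <| tendsto_measure_iInter_atTop
    (fun k => (MeasurableSet.biUnion (Set.to_countable _) fun n _ => hE n).nullMeasurableSet)
    (fun a b hab => Set.biUnion_mono (fun n hn => le_trans hab hn) fun _ _ => le_rfl)
    ⟨0, measure_ne_top _ _⟩

theorem sq_sum_Ico_measureReal_le_measureReal_iUnion_ge_mul [IsFiniteMeasure μ] {E : ℕ → Set Ω}
    (hE : ∀ n, MeasurableSet (E n)) (k N : ℕ) :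
    (∑ n ∈ Finset.Ico k N, μ.real (E n)) ^ 2 ≤
      μ.real (⋃ n ≥ k, E n) * ∑ n ∈ Finset.range N, ∑ m ∈ Finset.range N, μ.real (E n ∩ E m) := by
  have hIco : Finset.Ico k N ⊆ Finset.range N := fun n hn => by simp_all
  calc _ ≤ μ.real (⋃ n ∈ Finset.Ico k N, E n) *
        ∑ n ∈ Finset.Ico k N, ∑ m ∈ Finset.Ico k N, μ.real (E n ∩ E m) :=
        sq_sum_measureReal_le_measureReal_biUnion_mul_sum_inter μ _ fun n _ => hE n
    _ ≤ _ := by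
      have hunion : (⋃ n ∈ Finset.Ico k N, E n) ⊆ ⋃ n ≥ k, E n :=
        Set.iUnion₂_mono' fun n hn => ⟨n, (Finset.mem_Ico.1 hn).1, le_rfl⟩
      have hsum : ∑ n ∈ Finset.Ico k N, ∑ m ∈ Finset.Ico k N, μ.real (E n ∩ E m) ≤
          ∑ n ∈ Finset.range N, ∑ m ∈ Finset.range N, μ.real (E n ∩ E m) :=
        Finset.sum_le_sum_of_subset_of_nonneg hIco (fun _ _ _ => by positivity) |>.trans'
          (Finset.sum_le_sum fun _ _ =>
            Finset.sum_le_sum_of_subset_of_nonneg hIco fun _ _ _ => measureReal_nonneg)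
      exact mul_le_mul (measureReal_mono hunion (measure_ne_top _ _)) hsum (by positivity)
        measureReal_nonneg

end SecondMoment

theorem limsup_sq_div_le_of_sq_sub_le {S D : ℕ → ℝ} {C c : ℝ} (hS : Tendsto S atTop atTop)
    (hSD : ∀ N, S N ^ 2 ≤ D N) (hsub : ∀ᶠ N in atTop, (S N - C) ^ 2 ≤ c * D N) :
    limsup (fun N => S N ^ 2 / D N) atTop ≤ c := by
  have hbound : ∀ᶠ N in atTop, S N ^ 2 / D N ≤ c + 2 * |C| / S N := by
    filter_upwards [hsub, hS.eventually_gt_atTop 0] with N hN hpos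
    have hDpos : 0 < D N := lt_of_lt_of_le (by positivity) (hSD N)
    rw [div_le_iff₀ hDpos]
    calc S N ^ 2 = (S N - C) ^ 2 + (2 * C * S N - C ^ 2) := by ring
      _ ≤ c * D N + 2 * |C| * S N := by nlinarith [le_abs_self C, sq_nonneg C]
      _ ≤ (c + 2 * |C| / S N) * D N := by
        rw [add_mul, div_mul_eq_mul_div]
        gcongr
        rw [le_div_iff₀ hpos]
        nlinarith [abs_nonneg C, hSD N]
  have hlim : Tendsto (fun N => c + 2 * |C| / S N) atTop (𝓝 c) := by
    simpa using tendsto_const_nhds.add (tendsto_const_nhds.div_atTop hS)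
  have hnonneg : ∀ N, 0 ≤ S N ^ 2 / D N := fun N =>
    div_nonneg (sq_nonneg _) ((sq_nonneg _).trans (hSD N))
  calc limsup _ atTop ≤ limsup (fun N => c + 2 * |C| / S N) atTop :=
        limsup_le_limsup hbound (isCoboundedUnder_le_of_eventually_le atTop
          (Eventually.of_forall hnonneg)) hlim.isBoundedUnder_le
    _ = c := hlim.limsup_eq

theorem stmt_13 {Ω : Type*} [MeasurableSpace Ω] (μ : Measure Ω) [IsProbabilityMeasure μ]
    (E : ℕ → Set Ω) (hE : ∀ n, MeasurableSet (E n))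
    (hdiv : Tendsto (fun N => ∑ n ∈ Finset.range N, (μ (E n)).toReal) atTop atTop) :
    limsup (fun N =>
        (∑ n ∈ Finset.range N, ∑ m ∈ Finset.range N, (μ (E n)).toReal * (μ (E m)).toReal) /
        (∑ n ∈ Finset.range N, ∑ m ∈ Finset.range N, (μ (E n ∩ E m)).toReal)) atTop ≤
      (μ (limsup E atTop)).toReal := by
  set S : ℕ → ℝ := fun N => ∑ n ∈ Finset.range N, μ.real (E n)
  set D : ℕ → ℝ := fun N => ∑ n ∈ Finset.range N, ∑ m ∈ Finset.range N, μ.real (E n ∩ E m)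
  have hSD : ∀ N, S N ^ 2 ≤ D N := fun N =>
    (sq_sum_measureReal_le_measureReal_biUnion_mul_sum_inter μ _ fun n _ => hE n).trans
      (mul_le_of_le_one_left (by positivity) measureReal_le_one)
  have htail : ∀ k, ∀ᶠ N in atTop, (S N - S k) ^ 2 ≤ μ.real (⋃ n ≥ k, E n) * D N := fun k => by
    filter_upwards [eventually_ge_atTop k] with N hkN
    rw [← Finset.sum_Ico_eq_sub _ hkN]
    exact sq_sum_Ico_measureReal_le_measureReal_iUnion_ge_mul μ hE k N
  have hlimsup : limsup (fun N => S N ^ 2 / D N) atTop ≤ μ.real (limsup E atTop) :=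
    ge_of_tendsto' (tendsto_measureReal_iUnion_ge_limsup μ hE) fun k =>
      limsup_sq_div_le_of_sq_sub_le hdiv hSD (htail k)
  convert hlimsup using 4 with N <;> simp only [S, D, sq, Finset.sum_mul_sum, measureReal_def]
end

section
/- Let h ≥ 2 and b_1, …, b_h positive integers. For any A ⊆ ℤ_{≥0}, the representation count r_{A,h}(n) (number of (k_1,…,k_h) ∈ A^h with Σ b_i k_i = n) decomposes as r_{A,h}(n) = ρ_{A,h}(n) + Σ over a finite list of coefficient tuples (c_1,…,c_t) with t < h and max c_i ≤ b_1 + ⋯ + b_h of ρ^{(c_1,…,c_t)}_{A,t}(n), where ρ counts solutions with pairwise distinct coordinates (exact solutions). In particular, every non-exact solution of the original equation corresponds bijectively to an exact solution of an equation of strictly smaller length obtained by merging equal coordinates and summing their coefficients. -/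
/-!
Group the solutions `k` by their kernel, the equivalence relation `s` on indices with
`i ~ j ↔ k i = k j`. The solutions with kernel `s` are exactly the maps `k' ∘ π` with
`π : ι → ι/s` the projection and `k'` injective, and `k' ∘ π` solves `∑ b_i k_i = n` iff `k'`
solves the merged equation whose coefficient at a class is the sum of the `b_i` in it.
The kernel `⊥` gives the exact solutions, and every other kernel has fewer classes than indices.
-/

open Finset Function

instance Setoid.finite {α : Type*} [Finite α] : Finite (Setoid α) :=
  Finite.of_injective (fun s : Setoid α => ⇑s) fun _ _ h => Setoid.eq_iff_rel_eq.2 h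

theorem Nat.card_eq_sum_card_fiberwise {α β : Type*} [Fintype β] (g : α → β) (P : α → Prop)
    [Finite {a // P a}] : Nat.card {a // P a} = ∑ b, Nat.card {a // P a ∧ g a = b} := by
  rw [← Nat.card_congr (Equiv.sigmaFiberEquiv (g ∘ Subtype.val)), Nat.card_sigma]
  exact sum_congr rfl fun b _ =>
    Nat.card_congr (Equiv.subtypeSubtypeEquivSubtypeInter P (fun a => g a = b))

section Equation

variable {ι κ : Type*} [Fintype ι] [Fintype κ]

noncomputable def solutionCount (A : Set ℕ) (c : ι → ℕ) (n : ℕ) : ℕ :=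
  Nat.card {k : ι → ℕ // (∀ i, k i ∈ A) ∧ ∑ i, c i * k i = n}

noncomputable def exactSolutionCount (A : Set ℕ) (c : ι → ℕ) (n : ℕ) : ℕ :=
  Nat.card {k : ι → ℕ // (∀ i, k i ∈ A) ∧ (∑ i, c i * k i = n) ∧ Injective k}

theorem finite_setOf_sum_mul_eq {c : ι → ℕ} (hc : ∀ i, 0 < c i) (n : ℕ) :
    {k : ι → ℕ | ∑ i, c i * k i = n}.Finite := by
  refine (Set.Finite.pi (t := fun _ => Set.Iic n) fun _ => Set.finite_Iic n).subset
    fun k hk i _ => ?_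
  calc k i ≤ c i * k i := Nat.le_mul_of_pos_left _ (hc i)
    _ ≤ ∑ j, c j * k j := single_le_sum (fun j _ => Nat.zero_le (c j * k j)) (mem_univ i)
    _ = n := hk

theorem exactSolutionCount_comp_equiv (A : Set ℕ) (c : ι → ℕ) (n : ℕ) (e : κ ≃ ι) :
    exactSolutionCount A (c ∘ e) n = exactSolutionCount A c n := by
  refine Nat.card_congr (Equiv.subtypeEquiv (e.arrowCongr (Equiv.refl ℕ)) fun k => ?_)
  change _ ↔ (∀ i, k (e.symm i) ∈ A) ∧ (∑ i, c i * k (e.symm i) = n) ∧ Injective (k ∘ e.symm)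
  rw [e.symm.injective_comp, e.symm.forall_congr_left, ← e.sum_comp]
  simp only [comp_apply, Equiv.symm_symm, Equiv.symm_apply_apply]

end Equation

namespace Setoid

variable {ι : Type*} (s : Setoid ι)

def kerEqEquiv {α : Type*} (Q : (ι → α) → Prop) :
    {k : ι → α // Q k ∧ Setoid.ker k = s} ≃
      {k : Quotient s → α // Q (k ∘ Quotient.mk s) ∧ Injective k} where
  toFun k := ⟨Quotient.lift k.1 fun a b => (Setoid.ext_iff.1 k.2.2 a b).2, k.2.1, fun q₁ q₂ => by
    induction q₁ using Quotient.ind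
    induction q₂ using Quotient.ind
    exact fun h => Quotient.sound ((Setoid.ext_iff.1 k.2.2 _ _).1 h)⟩
  invFun k := ⟨k.1 ∘ Quotient.mk s, k.2.1,
    Setoid.ext fun _ _ => k.2.2.eq_iff.trans Quotient.eq⟩
  left_inv _ := rfl
  right_inv k := Subtype.ext <| funext fun q => by induction q using Quotient.ind; rfl

variable [Fintype ι]

open scoped Classical

noncomputable def mergedCoeff (c : ι → ℕ) (q : Quotient s) : ℕ :=
  ∑ i with Quotient.mk s i = q, c i

theorem sum_mul_comp_mk (c : ι → ℕ) (k : Quotient s → ℕ) :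
    ∑ i, c i * k (Quotient.mk s i) = ∑ q, s.mergedCoeff c q * k q := by
  rw [← sum_fiberwise univ (Quotient.mk s)]
  refine sum_congr rfl fun q _ => ?_
  rw [mergedCoeff, sum_mul]
  exact sum_congr rfl fun i hi => by rw [(mem_filter.1 hi).2]

theorem card_solutions_ker_eq (A : Set ℕ) (c : ι → ℕ) (n : ℕ) :
    Nat.card {k : ι → ℕ // ((∀ i, k i ∈ A) ∧ ∑ i, c i * k i = n) ∧ Setoid.ker k = s} =
      exactSolutionCount A (s.mergedCoeff c) n := by
  rw [Nat.card_congr (s.kerEqEquiv _)]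
  exact Nat.card_congr <| Equiv.subtypeEquivRight fun k => by
    simp only [comp_apply, s.sum_mul_comp_mk, Quotient.forall, and_assoc]

theorem mergedCoeff_pos {c : ι → ℕ} (hc : ∀ i, 0 < c i) (q : Quotient s) :
    0 < s.mergedCoeff c q := by
  induction q using Quotient.ind with | _ i
  exact (hc i).trans_le (single_le_sum (fun _ _ => Nat.zero_le _) (by simp))

theorem mergedCoeff_le_sum (c : ι → ℕ) (q : Quotient s) :
    s.mergedCoeff c q ≤ ∑ i, c i :=
  sum_le_sum_of_subset (filter_subset _ _)

theorem card_quotient_lt (hs : s ≠ ⊥) :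
    Fintype.card (Quotient s) < Fintype.card ι :=
  Fintype.card_lt_of_surjective_not_injective _ Quotient.mk_surjective fun h =>
    hs <| (Setoid.ker_mk_eq s).symm.trans ((Setoid.injective_iff_ker_bot _).1 h)

end Setoid

open scoped Classical in
theorem solutionCount_eq_add_sum {ι : Type*} [Fintype ι] [Fintype (Setoid ι)] {c : ι → ℕ}
    (hc : ∀ i, 0 < c i) (A : Set ℕ) (n : ℕ) :
    solutionCount A c n = exactSolutionCount A c n +
      ∑ s ∈ univ.erase (⊥ : Setoid ι), exactSolutionCount A (s.mergedCoeff c) n := by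
  have : Finite {k : ι → ℕ // (∀ i, k i ∈ A) ∧ ∑ i, c i * k i = n} :=
    ((finite_setOf_sum_mul_eq hc n).subset fun _ hk => hk.2).to_subtype
  rw [solutionCount, Nat.card_eq_sum_card_fiberwise Setoid.ker, ← add_sum_erase _ _ (mem_univ ⊥)]
  congr 1
  · simp_rw [← Setoid.injective_iff_ker_bot, and_assoc]
    rfl
  · exact sum_congr rfl fun s _ => s.card_solutions_ker_eq A c n

theorem stmt_17_general (h : ℕ) (b : Fin h → ℕ) (hb : ∀ i, 1 ≤ b i) :
    ∃ L : List (Σ t : ℕ, Fin t → ℕ),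
      (∀ p ∈ L, p.1 < h ∧ ∀ i, 1 ≤ p.2 i ∧ p.2 i ≤ ∑ j, b j) ∧
      ∀ (A : Set ℕ) (n : ℕ),
        Nat.card {k : Fin h → ℕ // (∀ i, k i ∈ A) ∧ ∑ i, b i * k i = n} =
          Nat.card {k : Fin h → ℕ //
            (∀ i, k i ∈ A) ∧ (∑ i, b i * k i = n) ∧ Function.Injective k} +
          (L.map (fun p => Nat.card {k : Fin p.1 → ℕ //
            (∀ i, k i ∈ A) ∧ (∑ i, p.2 i * k i = n) ∧ Function.Injective k})).sum := by
  classical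
  have := Fintype.ofFinite (Setoid (Fin h))
  let merged (s : Setoid (Fin h)) : Σ t : ℕ, Fin t → ℕ :=
    ⟨Fintype.card (Quotient s), s.mergedCoeff b ∘ (Fintype.equivFin _).symm⟩
  refine ⟨(univ.erase ⊥).toList.map merged, ?_, fun A n => ?_⟩
  · simp only [List.mem_map, mem_toList, mem_erase]
    rintro _ ⟨s, ⟨hs, -⟩, rfl⟩
    exact ⟨(s.card_quotient_lt hs).trans_eq (Fintype.card_fin h),
      fun i => ⟨s.mergedCoeff_pos hb _, s.mergedCoeff_le_sum b _⟩⟩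
  · rw [List.map_map, sum_map_toList]
    refine (solutionCount_eq_add_sum hb A n).trans (congrArg _ (sum_congr rfl fun s _ => ?_))
    exact (exactSolutionCount_comp_equiv _ _ _ _).symm

theorem stmt_17 (h : ℕ) (hh : 2 ≤ h) (b : Fin h → ℕ) (hb : ∀ i, 1 ≤ b i) :
    ∃ L : List (Σ t : ℕ, Fin t → ℕ),
      (∀ p ∈ L, p.1 < h ∧ ∀ i, 1 ≤ p.2 i ∧ p.2 i ≤ ∑ j, b j) ∧
      ∀ (A : Set ℕ) (n : ℕ),
        Nat.card {k : Fin h → ℕ // (∀ i, k i ∈ A) ∧ ∑ i, b i * k i = n} =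
          Nat.card {k : Fin h → ℕ //
            (∀ i, k i ∈ A) ∧ (∑ i, b i * k i = n) ∧ Function.Injective k} +
          (L.map (fun p => Nat.card {k : Fin p.1 → ℕ //
            (∀ i, k i ∈ A) ∧ (∑ i, p.2 i * k i = n) ∧ Function.Injective k})).sum :=
  stmt_17_general h b hb
end
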